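/- arXiv:2102.02504 — 7 statements merged into one kernel-verified Lean document; each statement's English description precedes it below -/
import Mathlib

section
/- Let E be a real inner product space, Λ ⊆ E a nonempty convex set, α > 0, L ≥ 0, and let f : E → ℝ be convex on Λ and L-Lipschitz on Λ (|f(λ)-f(λ')| ≤ L‖λ-λ'‖ for λ,λ' ∈ Λ). Let x ∈ Λ and suppose μ ∈ Λ minimizes the map λ ↦ f(λ) + ‖λ-x‖²/(2α) over Λ. Then for every λ ∈ Λ: f(x) ≤ f(λ) + (‖λ-x‖² - ‖λ-μ‖²)/(2α) + αL²/2. -/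
/-!
The proximal objective `f + ‖· - x‖² / (2α)` is `α⁻¹`-strongly convex on `Λ`, so it grows
quadratically away from its minimiser `μ`: its value at `λ` exceeds its value at `μ` by at least
`‖λ - μ‖² / (2α)`. It remains to pass from `f μ` to `f x`, which costs
`L ‖x - μ‖ ≤ ‖μ - x‖² / (2α) + α L² / 2` by the Lipschitz bound and the weighted AM-GM inequality.
-/

open Set Filter Topology

section StrongConvexity

variable {E : Type*} [NormedAddCommGroup E] [InnerProductSpace ℝ E] {s : Set E}

lemma strongConvexOn_norm_sub_sq_div (hs : Convex ℝ s) (c : E) (α : ℝ) :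
    StrongConvexOn s α⁻¹ fun y ↦ ‖y - c‖ ^ 2 / (2 * α) := by
  have haffine : (fun y ↦ ‖y - c‖ ^ 2 / (2 * α) - α⁻¹ / 2 * ‖y‖ ^ 2)
      = fun y ↦ (‖c‖ ^ 2 - 2 * inner ℝ y c) / (2 * α) := by
    ext y
    rw [norm_sub_sq_real]
    ring
  rw [strongConvexOn_iff_convex, haffine]
  refine ⟨hs, fun y _ z _ a b _ _ hab ↦ le_of_eq ?_⟩
  simp only [inner_add_left, real_inner_smul_left, smul_eq_mul]
  obtain rfl := eq_sub_of_add_eq' hab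
  ring

lemma StrongConvexOn.add_sq_le_of_isMinOn {f : E → ℝ} {m : ℝ} {μ y : E}
    (hf : StrongConvexOn s m f) (hmin : IsMinOn f s μ) (hμ : μ ∈ s) (hy : y ∈ s) :
    f μ + m / 2 * ‖y - μ‖ ^ 2 ≤ f y := by
  set k := m / 2 * ‖y - μ‖ ^ 2 with hk
  have hchord : ∀ t ∈ Ioo (0 : ℝ) 1, f μ + (1 - t) * k ≤ f y := by
    rintro t ⟨ht0, ht1⟩
    have hseg : t • y + (1 - t) • μ ∈ s := hf.1 hy hμ ht0.le (by linarith) (by ring)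
    have hconv := hf.2 hy hμ ht0.le (by linarith : (0 : ℝ) ≤ 1 - t) (by ring)
    have hle := hmin hseg
    simp only [smul_eq_mul, mem_ofPred_eq] at hconv hle
    have : t * (f μ + (1 - t) * k) ≤ t * f y := by rw [hk]; linarith
    exact le_of_mul_le_mul_left this ht0
  have hlim : Tendsto (fun t : ℝ ↦ f μ + (1 - t) * k) (𝓝[>] 0) (𝓝 (f μ + k)) := by
    have hcont : Continuous fun t : ℝ ↦ f μ + (1 - t) * k := by fun_prop
    simpa using (hcont.tendsto 0).mono_left nhdsWithin_le_nhds
  exact le_of_tendsto hlim (eventually_of_mem (Ioo_mem_nhdsGT one_pos) hchord)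

end StrongConvexity

lemma mul_le_sq_div_add_mul_sq_div {α : ℝ} (hα : 0 < α) (L t : ℝ) :
    L * t ≤ t ^ 2 / (2 * α) + α * L ^ 2 / 2 := by
  rw [div_add_div _ _ (by positivity) two_ne_zero, le_div_iff₀ (by positivity)]
  nlinarith [sq_nonneg (t - α * L)]

theorem opms_per_step_inequality_general
    {E : Type*} [NormedAddCommGroup E] [InnerProductSpace ℝ E]
    (Λ : Set E) (hΛ : Convex ℝ Λ)
    (α L : ℝ) (hα : 0 < α) (f : E → ℝ)
    (hconv : ∀ a ∈ Λ, ∀ b ∈ Λ, ∀ s : ℝ, 0 ≤ s → s ≤ 1 →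
      f (s • a + (1 - s) • b) ≤ s * f a + (1 - s) * f b)
    (hlip : ∀ a ∈ Λ, ∀ b ∈ Λ, |f a - f b| ≤ L * ‖a - b‖)
    (x : E) (hx : x ∈ Λ) (μ : E) (hμ : μ ∈ Λ)
    (hmin : ∀ lam ∈ Λ, f μ + ‖μ - x‖ ^ 2 / (2 * α) ≤ f lam + ‖lam - x‖ ^ 2 / (2 * α)) :
    ∀ lam ∈ Λ,
      f x ≤ f lam + (‖lam - x‖ ^ 2 - ‖lam - μ‖ ^ 2) / (2 * α) + α * L ^ 2 / 2 := by
  intro lam hlam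
  have hf : ConvexOn ℝ Λ f := ⟨hΛ, fun a ha b hb s t hs _ hst ↦ by
    obtain rfl := eq_sub_of_add_eq' hst
    exact hconv a ha b hb s hs (by linarith)⟩
  have hprox : StrongConvexOn Λ α⁻¹ fun y ↦ f y + ‖y - x‖ ^ 2 / (2 * α) := by
    have h := hf.uniformConvexOn_zero.add (strongConvexOn_norm_sub_sq_div hΛ x α)
    rwa [zero_add] at h
  have hgrowth := hprox.add_sq_le_of_isMinOn hmin hμ hlam
  have hfx : f x ≤ f μ + L * ‖μ - x‖ := by
    rw [norm_sub_rev]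
    linarith [(abs_le.mp (hlip x hx μ hμ)).2]
  have hyoung := mul_le_sq_div_add_mul_sq_div hα L ‖μ - x‖
  have hquad : α⁻¹ / 2 * ‖lam - μ‖ ^ 2 = ‖lam - μ‖ ^ 2 / (2 * α) := by ring
  rw [sub_div]
  linarith

/-- Per-step inequality for the online proximal meta-strategy (OPMS). -/
theorem opms_per_step_inequality
    {E : Type*} [NormedAddCommGroup E] [InnerProductSpace ℝ E]
    (Λ : Set E) (hΛ : Convex ℝ Λ) (hne : Λ.Nonempty)
    (α L : ℝ) (hα : 0 < α) (hL : 0 ≤ L) (f : E → ℝ)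
    (hconv : ∀ a ∈ Λ, ∀ b ∈ Λ, ∀ s : ℝ, 0 ≤ s → s ≤ 1 →
      f (s • a + (1 - s) • b) ≤ s * f a + (1 - s) * f b)
    (hlip : ∀ a ∈ Λ, ∀ b ∈ Λ, |f a - f b| ≤ L * ‖a - b‖)
    (x : E) (hx : x ∈ Λ) (μ : E) (hμ : μ ∈ Λ)
    (hmin : ∀ lam ∈ Λ, f μ + ‖μ - x‖ ^ 2 / (2 * α) ≤ f lam + ‖lam - x‖ ^ 2 / (2 * α)) :
    ∀ lam ∈ Λ,
      f x ≤ f lam + (‖lam - x‖ ^ 2 - ‖lam - μ‖ ^ 2) / (2 * α) + α * L ^ 2 / 2 :=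
  opms_per_step_inequality_general Λ hΛ α L hα f hconv hlip x hx μ hμ hmin
end

section
/- Let E be a real inner product space, Λ ⊆ E a nonempty convex set, α > 0, L ≥ 0, and T ≥ 1 a natural number. For each t ∈ {1,…,T} let f_t : E → ℝ be convex on Λ and L-Lipschitz on Λ. Let λ_1 ∈ Λ and, for t = 1,…,T, let λ_{t+1} ∈ Λ minimize the map λ ↦ f_t(λ) + ‖λ - λ_t‖²/(2α) over Λ. Then for every λ ∈ Λ: Σ_{t=1}^T f_t(λ_t) ≤ Σ_{t=1}^T f_t(λ) + αTL²/2 + ‖λ - λ_1‖²/(2α). -/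
/-!
The proximal objective `f_t + ‖· - λ_t‖² / (2α)` is `α⁻¹`-strongly convex, so its minimiser
`λ_{t+1}` satisfies the three-point inequality
`f_t λ_{t+1} + (‖λ_{t+1} - λ_t‖² + ‖λ - λ_{t+1}‖²) / (2α) ≤ f_t λ + ‖λ - λ_t‖² / (2α)`.
Lipschitz continuity and Young's inequality `L r ≤ α L² / 2 + r² / (2α)` replace `f_t λ_{t+1}` by
`f_t λ_t` at the cost `α L² / 2`, and summing over `t` the distances `‖λ - λ_t‖²` telescope.
-/

open Filter Topology

section NormedSpace

variable {E : Type*} [NormedAddCommGroup E] [NormedSpace ℝ E] {s : Set E} {g : E → ℝ} {m : ℝ}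
  {y z : E}

theorem StrongConvexOn.add_sq_norm_sub_le_of_isMinOn (hg : StrongConvexOn s m g)
    (hmin : IsMinOn g s y) (hy : y ∈ s) (hz : z ∈ s) :
    g y + m / 2 * ‖z - y‖ ^ 2 ≤ g z := by
  have hsegment : ∀ a ∈ Set.Ioo (0 : ℝ) 1, g y + (1 - a) * (m / 2 * ‖z - y‖ ^ 2) ≤ g z := by
    rintro a ⟨ha₀, ha₁⟩
    have hconv := hg.2 hz hy ha₀.le (sub_nonneg.2 ha₁.le) (add_sub_cancel a 1)
    have hle : g y ≤ g (a • z + (1 - a) • y) :=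
      hmin (hg.1 hz hy ha₀.le (sub_nonneg.2 ha₁.le) (add_sub_cancel a 1))
    simp only [smul_eq_mul] at hconv
    refine le_of_mul_le_mul_left ?_ ha₀
    linear_combination hle + hconv
  have hlim : Tendsto (fun a : ℝ ↦ g y + (1 - a) * (m / 2 * ‖z - y‖ ^ 2)) (𝓝[>] 0)
      (𝓝 (g y + (1 - 0) * (m / 2 * ‖z - y‖ ^ 2))) :=
    tendsto_nhdsWithin_of_tendsto_nhds (by fun_prop : Continuous _).continuousAt
  simpa using le_of_tendsto hlim (eventually_of_mem (Ioo_mem_nhdsGT one_pos) hsegment)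

end NormedSpace

section InnerProductSpace

variable {E : Type*} [NormedAddCommGroup E] [InnerProductSpace ℝ E] {s : Set E} {f : E → ℝ}

theorem ConvexOn.strongConvexOn_add_sq_norm_sub_div (hf : ConvexOn ℝ s f) (x : E) (α : ℝ) :
    StrongConvexOn s α⁻¹ fun w ↦ f w + ‖w - x‖ ^ 2 / (2 * α) := by
  rw [strongConvexOn_iff_convex]
  have haffine : (fun w ↦ f w + ‖w - x‖ ^ 2 / (2 * α) - α⁻¹ / 2 * ‖w‖ ^ 2) =
      f + (⇑(-(α⁻¹ • innerₛₗ ℝ x)) + fun _ ↦ ‖x‖ ^ 2 / (2 * α)) := by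
    ext w
    simp only [Pi.add_apply, LinearMap.neg_apply, LinearMap.smul_apply, innerₛₗ_apply_apply,
      smul_eq_mul, norm_sub_sq_real, real_inner_comm x w]
    ring
  rw [haffine]
  exact hf.add ((LinearMap.convexOn _ hf.1).add_const _)

theorem ConvexOn.le_add_of_isMinOn_add_sq_norm_sub_div (hf : ConvexOn ℝ s f) {α L : ℝ}
    (hα : 0 < α) {x y z : E} (hy : y ∈ s) (hz : z ∈ s) (hlip : |f x - f y| ≤ L * ‖x - y‖)
    (hmin : IsMinOn (fun w ↦ f w + ‖w - x‖ ^ 2 / (2 * α)) s y) :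
    f x ≤ f z + α * L ^ 2 / 2 + (‖z - x‖ ^ 2 / (2 * α) - ‖z - y‖ ^ 2 / (2 * α)) := by
  have hthree := (hf.strongConvexOn_add_sq_norm_sub_div x α).add_sq_norm_sub_le_of_isMinOn
    hmin hy hz
  have hyoung : L * ‖y - x‖ ≤ α * L ^ 2 / 2 + ‖y - x‖ ^ 2 / (2 * α) := by
    have := sq_nonneg (α * L - ‖y - x‖)
    field_simp
    nlinarith
  rw [norm_sub_rev] at hlip
  have hdiv : α⁻¹ / 2 * ‖z - y‖ ^ 2 = ‖z - y‖ ^ 2 / (2 * α) := by field_simp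
  linarith [(abs_le.1 hlip).2]

end InnerProductSpace

theorem opms_regret_bound_general
    {E : Type*} [NormedAddCommGroup E] [InnerProductSpace ℝ E]
    (Λ : Set E) (hΛ : Convex ℝ Λ)
    (α L : ℝ) (hα : 0 < α) (T : ℕ)
    (f : ℕ → E → ℝ)
    (hconv : ∀ t ∈ Finset.Icc 1 T, ∀ a ∈ Λ, ∀ b ∈ Λ, ∀ s : ℝ, 0 ≤ s → s ≤ 1 →
      f t (s • a + (1 - s) • b) ≤ s * f t a + (1 - s) * f t b)
    (hlip : ∀ t ∈ Finset.Icc 1 T, ∀ a ∈ Λ, ∀ b ∈ Λ, |f t a - f t b| ≤ L * ‖a - b‖)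
    (lam : ℕ → E) (hlam1 : lam 1 ∈ Λ)
    (hmem : ∀ t ∈ Finset.Icc 1 T, lam (t + 1) ∈ Λ)
    (hmin : ∀ t ∈ Finset.Icc 1 T, ∀ l ∈ Λ,
      f t (lam (t + 1)) + ‖lam (t + 1) - lam t‖ ^ 2 / (2 * α) ≤
        f t l + ‖l - lam t‖ ^ 2 / (2 * α)) :
    ∀ l ∈ Λ,
      ∑ t ∈ Finset.Icc 1 T, f t (lam t) ≤
        ∑ t ∈ Finset.Icc 1 T, f t l + α * T * L ^ 2 / 2 + ‖l - lam 1‖ ^ 2 / (2 * α) := by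
  intro l hl
  set D : ℕ → ℝ := fun t ↦ ‖l - lam t‖ ^ 2 / (2 * α)
  have hconvOn : ∀ t ∈ Finset.Icc 1 T, ConvexOn ℝ Λ (f t) := fun t ht ↦
    ⟨hΛ, fun a ha b hb s r hs hr hsr ↦ by
      obtain rfl := eq_sub_of_add_eq' hsr
      exact hconv t ht a ha b hb s hs (by linarith)⟩
  have hlam : ∀ t ∈ Finset.Icc 1 T, lam t ∈ Λ := by
    intro t ht
    rcases eq_or_ne t 1 with rfl | ht1
    · exact hlam1
    · rw [Finset.mem_Icc] at ht
      simpa [Nat.sub_add_cancel ht.1] using hmem (t - 1) (Finset.mem_Icc.2 ⟨by omega, by omega⟩)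
  have hstep : ∀ t ∈ Finset.Icc 1 T, f t (lam t) ≤ f t l + α * L ^ 2 / 2 + (D t - D (t + 1)) :=
    fun t ht ↦ (hconvOn t ht).le_add_of_isMinOn_add_sq_norm_sub_div hα (hmem t ht) hl
      (hlip t ht _ (hlam t ht) _ (hmem t ht)) (hmin t ht)
  have htelescope : ∑ t ∈ Finset.Icc 1 T, (D t - D (t + 1)) = D 1 - D (T + 1) := by
    rw [← Finset.Ico_add_one_right_eq_Icc, ← neg_sub, ← Finset.sum_Ico_sub (f := D) (by omega),
      ← Finset.sum_neg_distrib]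
    simp only [neg_sub]
  calc ∑ t ∈ Finset.Icc 1 T, f t (lam t)
      ≤ ∑ t ∈ Finset.Icc 1 T, (f t l + α * L ^ 2 / 2 + (D t - D (t + 1))) :=
        Finset.sum_le_sum hstep
    _ = ∑ t ∈ Finset.Icc 1 T, f t l + α * T * L ^ 2 / 2 + (D 1 - D (T + 1)) := by
        rw [Finset.sum_add_distrib, Finset.sum_add_distrib, Finset.sum_const, Nat.card_Icc,
          htelescope, nsmul_eq_mul, Nat.add_sub_cancel]
        ring
    _ ≤ _ := by
        have : 0 ≤ D (T + 1) := by positivity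
        linarith

/-- Proposition 1 of the paper, for the online proximal meta-strategy (OPMS). -/
theorem opms_regret_bound
    {E : Type*} [NormedAddCommGroup E] [InnerProductSpace ℝ E]
    (Λ : Set E) (hΛ : Convex ℝ Λ) (hne : Λ.Nonempty)
    (α L : ℝ) (hα : 0 < α) (hL : 0 ≤ L) (T : ℕ) (hT : 1 ≤ T)
    (f : ℕ → E → ℝ)
    (hconv : ∀ t ∈ Finset.Icc 1 T, ∀ a ∈ Λ, ∀ b ∈ Λ, ∀ s : ℝ, 0 ≤ s → s ≤ 1 →
      f t (s • a + (1 - s) • b) ≤ s * f t a + (1 - s) * f t b)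
    (hlip : ∀ t ∈ Finset.Icc 1 T, ∀ a ∈ Λ, ∀ b ∈ Λ, |f t a - f t b| ≤ L * ‖a - b‖)
    (lam : ℕ → E) (hlam1 : lam 1 ∈ Λ)
    (hmem : ∀ t ∈ Finset.Icc 1 T, lam (t + 1) ∈ Λ)
    (hmin : ∀ t ∈ Finset.Icc 1 T, ∀ l ∈ Λ,
      f t (lam (t + 1)) + ‖lam (t + 1) - lam t‖ ^ 2 / (2 * α) ≤
        f t l + ‖l - lam t‖ ^ 2 / (2 * α)) :
    ∀ l ∈ Λ,
      ∑ t ∈ Finset.Icc 1 T, f t (lam t) ≤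
        ∑ t ∈ Finset.Icc 1 T, f t l + α * T * L ^ 2 / 2 + ‖l - lam 1‖ ^ 2 / (2 * α) :=
  opms_regret_bound_general Λ hΛ α L hα T f hconv hlip lam hlam1 hmem hmin
end

section
/- Let d ≥ 1, n ≥ 1 be natural numbers, Γ > 0, C > 0, and 0 < γ̲ < γ̄ < ∞. For i = 1,…,n let ℓ_i : ℝ^d → ℝ be convex and Γ-Lipschitz. Define, for ϑ ∈ ℝ^d with ‖ϑ‖ ≤ C and γ ∈ [γ̲, γ̄], the meta-loss L(ϑ,γ) = inf_{θ : ‖θ‖ ≤ C} { Σ_{i=1}^n ℓ_i(θ) + γΓ²n/2 + ‖θ-ϑ‖²/(2γ) }. Then L is convex on Λ = {ϑ : ‖ϑ‖ ≤ C} × [γ̲, γ̄], and L is Lipschitz on Λ with constant √(n²Γ⁴/4 + 4C²/γ̲² + 4C⁴/γ̲⁴), where the distance between (ϑ,γ) and (ϑ',γ') is √(‖ϑ-ϑ'‖² + (γ-γ')²). -/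
/-!
The regret bound `∑ ℓᵢ θ + γΓ²n/2 + ‖θ - ϑ‖²/(2γ)` is jointly convex in `(θ, ϑ, γ)`, since the
perspective `(x, t) ↦ ‖x‖²/t` of the squared norm is convex on `t > 0`; minimising a jointly
convex function over the convex ball `‖θ‖ ≤ C` leaves a convex function of `(ϑ, γ)`.
For fixed `θ` in the ball the bound is Lipschitz in `(ϑ, γ) ∈ Λ`: its partial derivatives
`(ϑ - θ)/γ` and `Γ²n/2 - ‖θ - ϑ‖²/(2γ²)` are bounded by `2C/γ̲` and `max(Γ²n/2, 2C²/γ̲²)`, which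
gives the constant, and an infimum of uniformly Lipschitz functions is Lipschitz.
-/

open Set Metric

theorem mul_add_mul_le_sqrt_mul_sqrt (a b c d : ℝ) :
    a * c + b * d ≤ √(a ^ 2 + b ^ 2) * √(c ^ 2 + d ^ 2) := by
  simpa [Fin.sum_univ_two] using Real.sum_mul_le_sqrt_mul_sqrt Finset.univ ![a, b] ![c, d]

theorem abs_sub_le_sqrt_sq_add_sq {p q Q : ℝ} (hp : 0 ≤ p) (hq : 0 ≤ q) (hqQ : q ≤ Q) :
    |p - q| ≤ √(p ^ 2 + Q ^ 2) := by
  have hp' : p ≤ √(p ^ 2 + Q ^ 2) := Real.le_sqrt_of_sq_le (by nlinarith)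
  have hQ' : Q ≤ √(p ^ 2 + Q ^ 2) := Real.le_sqrt_of_sq_le (by nlinarith)
  exact abs_le.2 ⟨by linarith, by linarith⟩

theorem sq_add_div_add_le {a b A B t u : ℝ} (ha : 0 ≤ a) (hb : 0 ≤ b) (ht : 0 < t) (hu : 0 < u) :
    (a * A + b * B) ^ 2 / (a * t + b * u) ≤ a * (A ^ 2 / t) + b * (B ^ 2 / u) := by
  rcases (show 0 ≤ a * t + b * u by positivity).eq_or_lt with h | h
  · rw [← h, div_zero]; positivity
  rw [div_le_iff₀ h]
  have hgap : (a * (A ^ 2 / t) + b * (B ^ 2 / u)) * (a * t + b * u) =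
      (a * A + b * B) ^ 2 + a * b * (A * u - B * t) ^ 2 / (t * u) := by
    field_simp; ring
  rw [hgap]
  have : 0 ≤ a * b * (A * u - B * t) ^ 2 / (t * u) := by positivity
  linarith

theorem ConvexOn.sInf_image_prod {E F : Type*} [AddCommGroup E] [Module ℝ E] [AddCommGroup F]
    [Module ℝ F] {K : Set E} {D : Set F} {G : E × F → ℝ} (hG : ConvexOn ℝ (K ×ˢ D) G) (hK : K.Nonempty)
    (hbdd : ∀ y ∈ D, BddBelow ((fun θ => G (θ, y)) '' K)) :
    ConvexOn ℝ D fun y => sInf ((fun θ => G (θ, y)) '' K) := by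
  refine ⟨?_, fun y hy y' hy' a b ha hb hab => ?_⟩
  · simpa [Set.snd_image_prod hK] using hG.1.linear_image (LinearMap.snd ℝ E F)
  refine le_of_forall_pos_le_add fun ε hε => ?_
  obtain ⟨_, ⟨θ, hθ, rfl⟩, hθε⟩ :=
    exists_lt_of_csInf_lt (hK.image _) (lt_add_of_pos_right (sInf ((fun θ => G (θ, y)) '' K)) hε)
  obtain ⟨_, ⟨θ', hθ', rfl⟩, hθ'ε⟩ :=
    exists_lt_of_csInf_lt (hK.image _) (lt_add_of_pos_right (sInf ((fun θ => G (θ, y')) '' K)) hε)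
  have hmem := hG.1 (mk_mem_prod hθ hy) (mk_mem_prod hθ' hy') ha hb hab
  calc sInf ((fun θ => G (θ, a • y + b • y')) '' K)
      ≤ G (a • (θ, y) + b • (θ', y')) := csInf_le (hbdd _ hmem.2) ⟨_, hmem.1, rfl⟩
    _ ≤ a * G (θ, y) + b * G (θ', y') := hG.2 (mk_mem_prod hθ hy) (mk_mem_prod hθ' hy') ha hb hab
    _ ≤ a * (sInf ((fun θ => G (θ, y)) '' K) + ε) + b * (sInf ((fun θ => G (θ, y')) '' K) + ε) :=
        by gcongr
    _ = _ := by simp only [smul_eq_mul]; linear_combination ε * hab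

theorem sInf_image_le_sInf_image_add {α : Type*} {K : Set α} {f g : α → ℝ} {c : ℝ}
    (hK : K.Nonempty) (hf : BddBelow (f '' K)) (hfg : ∀ x ∈ K, f x ≤ g x + c) :
    sInf (f '' K) ≤ sInf (g '' K) + c := by
  rw [← sub_le_iff_le_add]
  refine le_csInf (hK.image g) ?_
  rintro _ ⟨x, hx, rfl⟩
  exact sub_le_iff_le_add.2 ((csInf_le hf (mem_image_of_mem f hx)).trans (hfg x hx))

section

variable {E : Type*} [SeminormedAddCommGroup E]

theorem convexOn_norm_sq_div [NormedSpace ℝ E] :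
    ConvexOn ℝ (univ ×ˢ Ioi 0) fun p : E × ℝ => ‖p.1‖ ^ 2 / p.2 := by
  refine ⟨convex_univ.prod (convex_Ioi 0), ?_⟩
  rintro ⟨x, t⟩ ⟨-, ht : 0 < t⟩ ⟨y, u⟩ ⟨-, hu : 0 < u⟩ a b ha hb -
  have hnorm : ‖a • x + b • y‖ ≤ a * ‖x‖ + b * ‖y‖ := by
    simpa [norm_smul, abs_of_nonneg ha, abs_of_nonneg hb] using norm_add_le (a • x) (b • y)
  calc ‖a • x + b • y‖ ^ 2 / (a * t + b * u)
      ≤ (a * ‖x‖ + b * ‖y‖) ^ 2 / (a * t + b * u) := by gcongr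
    _ ≤ a * (‖x‖ ^ 2 / t) + b * (‖y‖ ^ 2 / u) := sq_add_div_add_le ha hb ht hu

theorem sub_mul_add_norm_sub_sq_div_sub_le {C γlo c γ γ' : ℝ} {θ ϑ ϑ' : E} (hc : 0 ≤ c)
    (hγlo : 0 < γlo) (hθ : ‖θ‖ ≤ C) (hϑ : ‖ϑ‖ ≤ C) (hϑ' : ‖ϑ'‖ ≤ C) (hγ : γlo ≤ γ)
    (hγ' : γlo ≤ γ') :
    (γ - γ') * c + ‖θ - ϑ‖ ^ 2 / (2 * γ) - ‖θ - ϑ'‖ ^ 2 / (2 * γ') ≤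
      √(c ^ 2 + 4 * C ^ 2 / γlo ^ 2 + 4 * C ^ 4 / γlo ^ 4) * √(‖ϑ - ϑ'‖ ^ 2 + (γ - γ') ^ 2) := by
  have hγpos : 0 < γ := hγlo.trans_le hγ
  have hγ'pos : 0 < γ' := hγlo.trans_le hγ'
  have hA : ‖θ - ϑ‖ ≤ 2 * C := (norm_sub_le _ _).trans (by linarith)
  have hA' : ‖θ - ϑ'‖ ≤ 2 * C := (norm_sub_le _ _).trans (by linarith)
  have hAA' : ‖θ - ϑ‖ - ‖θ - ϑ'‖ ≤ ‖ϑ - ϑ'‖ := by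
    simpa [norm_sub_rev ϑ' ϑ] using norm_sub_norm_le (θ - ϑ) (θ - ϑ')
  -- One summand per partial derivative, bounded by `2C/γlo` and by `max c (2C²/γlo²)`.
  have hsplit : (γ - γ') * c + ‖θ - ϑ‖ ^ 2 / (2 * γ) - ‖θ - ϑ'‖ ^ 2 / (2 * γ') =
      (‖θ - ϑ‖ - ‖θ - ϑ'‖) * ((‖θ - ϑ‖ + ‖θ - ϑ'‖) / (2 * γ)) +
        (γ - γ') * (c - ‖θ - ϑ'‖ ^ 2 / (2 * γ * γ')) := by
    field_simp; ring
  have hϑpart : (‖θ - ϑ‖ - ‖θ - ϑ'‖) * ((‖θ - ϑ‖ + ‖θ - ϑ'‖) / (2 * γ)) ≤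
      ‖ϑ - ϑ'‖ * (2 * C / γlo) := by
    have : (‖θ - ϑ‖ + ‖θ - ϑ'‖) / (2 * γ) ≤ 2 * C / γlo := by
      rw [div_le_div_iff₀ (by positivity) hγlo]; nlinarith [norm_nonneg (θ - ϑ)]
    exact mul_le_mul hAA' this (by positivity) (norm_nonneg _)
  have hγpart : (γ - γ') * (c - ‖θ - ϑ'‖ ^ 2 / (2 * γ * γ')) ≤
      |γ - γ'| * √(c ^ 2 + (2 * C ^ 2 / γlo ^ 2) ^ 2) := by
    have hq : ‖θ - ϑ'‖ ^ 2 / (2 * γ * γ') ≤ 2 * C ^ 2 / γlo ^ 2 := by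
      rw [div_le_div_iff₀ (by positivity) (by positivity)]
      have hγγ' : γlo ^ 2 ≤ γ * γ' := by nlinarith
      have hsq : ‖θ - ϑ'‖ ^ 2 ≤ 4 * C ^ 2 := by nlinarith [norm_nonneg (θ - ϑ')]
      nlinarith [mul_le_mul hsq hγγ' (sq_nonneg _) (by positivity)]
    calc _ ≤ |(γ - γ') * (c - ‖θ - ϑ'‖ ^ 2 / (2 * γ * γ'))| := le_abs_self _
      _ = |γ - γ'| * |c - ‖θ - ϑ'‖ ^ 2 / (2 * γ * γ')| := abs_mul _ _
      _ ≤ _ := by gcongr; exact abs_sub_le_sqrt_sq_add_sq hc (by positivity) hq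
  calc _ = _ := hsplit
    _ ≤ ‖ϑ - ϑ'‖ * (2 * C / γlo) + |γ - γ'| * √(c ^ 2 + (2 * C ^ 2 / γlo ^ 2) ^ 2) :=
        add_le_add hϑpart hγpart
    _ ≤ √(‖ϑ - ϑ'‖ ^ 2 + |γ - γ'| ^ 2) *
          √((2 * C / γlo) ^ 2 + √(c ^ 2 + (2 * C ^ 2 / γlo ^ 2) ^ 2) ^ 2) :=
        mul_add_mul_le_sqrt_mul_sqrt _ _ _ _
    _ = _ := by
        rw [sq_abs, Real.sq_sqrt (by positivity), mul_comm]
        congr 2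
        ring

-- The regret bound of online gradient descent at comparator `θ`, with `p = (θ, ϑ, γ)`.
noncomputable def ogaRegretBound {n : ℕ} (ℓ : Fin n → E → ℝ) (Γ : ℝ) (p : E × E × ℝ) : ℝ :=
  ∑ i, ℓ i p.1 + p.2.2 * Γ ^ 2 * n / 2 + ‖p.1 - p.2.1‖ ^ 2 / (2 * p.2.2)

noncomputable def ogaMetaLoss {n : ℕ} (ℓ : Fin n → E → ℝ) (Γ C : ℝ) (ϑ : E) (γ : ℝ) : ℝ :=
  sInf ((fun θ => ogaRegretBound ℓ Γ (θ, ϑ, γ)) '' closedBall 0 C)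

variable {n : ℕ} {ℓ : Fin n → E → ℝ} {Γ : ℝ}

theorem convexOn_ogaRegretBound [NormedSpace ℝ E] (hℓ : ∀ i, ConvexOn ℝ univ (ℓ i)) :
    ConvexOn ℝ (univ ×ˢ univ ×ˢ Ioi 0) (ogaRegretBound ℓ Γ) := by
  refine ⟨convex_univ.prod (convex_univ.prod (convex_Ioi 0)), ?_⟩
  rintro ⟨θ, ϑ, γ⟩ ⟨-, -, hγ : 0 < γ⟩ ⟨θ', ϑ', γ'⟩ ⟨-, -, hγ' : 0 < γ'⟩ a b ha hb hab
  have hsum : ∑ i, ℓ i (a • θ + b • θ') ≤ a * ∑ i, ℓ i θ + b * ∑ i, ℓ i θ' := by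
    rw [Finset.mul_sum, Finset.mul_sum, ← Finset.sum_add_distrib]
    exact Finset.sum_le_sum fun i _ => (hℓ i).2 trivial trivial ha hb hab
  have hdist : ‖a • θ + b • θ' - (a • ϑ + b • ϑ')‖ ^ 2 / (2 * (a * γ + b * γ')) ≤
      a * (‖θ - ϑ‖ ^ 2 / (2 * γ)) + b * (‖θ' - ϑ'‖ ^ 2 / (2 * γ')) := by
    have := convexOn_norm_sq_div.2 (x := (θ - ϑ, 2 * γ)) (y := (θ' - ϑ', 2 * γ'))
      ⟨trivial, by simpa using hγ⟩ ⟨trivial, by simpa using hγ'⟩ ha hb hab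
    have hvec : a • θ + b • θ' - (a • ϑ + b • ϑ') = a • (θ - ϑ) + b • (θ' - ϑ') := by
      simp only [smul_sub]; abel
    rw [hvec, show 2 * (a * γ + b * γ') = a * (2 * γ) + b * (2 * γ') by ring]
    simpa only [Prod.smul_mk, Prod.mk_add_mk, smul_eq_mul] using this
  simp only [ogaRegretBound, Prod.smul_mk, Prod.mk_add_mk, smul_eq_mul]
  linear_combination hsum + hdist

theorem ogaRegretBound_le_add {C γlo γ γ' : ℝ} {θ ϑ ϑ' : E} (hγlo : 0 < γlo) (hθ : ‖θ‖ ≤ C)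
    (hϑ : ‖ϑ‖ ≤ C) (hϑ' : ‖ϑ'‖ ≤ C) (hγ : γlo ≤ γ) (hγ' : γlo ≤ γ') :
    ogaRegretBound ℓ Γ (θ, ϑ, γ) ≤ ogaRegretBound ℓ Γ (θ, ϑ', γ') +
      √(n ^ 2 * Γ ^ 4 / 4 + 4 * C ^ 2 / γlo ^ 2 + 4 * C ^ 4 / γlo ^ 4) *
        √(‖ϑ - ϑ'‖ ^ 2 + (γ - γ') ^ 2) := by
  have := sub_mul_add_norm_sub_sq_div_sub_le (c := Γ ^ 2 * n / 2) (by positivity) hγlo hθ hϑ hϑ'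
    hγ hγ'
  rw [show (Γ ^ 2 * n / 2) ^ 2 = (n : ℝ) ^ 2 * Γ ^ 4 / 4 by ring] at this
  simp only [ogaRegretBound]
  linarith

theorem bddBelow_ogaRegretBound_image [ProperSpace E] (hℓ : ∀ i, Continuous (ℓ i)) (C : ℝ)
    (y : E × ℝ) : BddBelow ((fun θ => ogaRegretBound ℓ Γ (θ, y)) '' closedBall 0 C) :=
  (isCompact_closedBall 0 C).bddBelow_image <| by simp only [ogaRegretBound]; fun_prop

variable [ProperSpace E] {C γlo : ℝ}

theorem convexOn_ogaMetaLoss [NormedSpace ℝ E] (hC : 0 ≤ C) (hγlo : 0 < γlo) (γhi : ℝ)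
    (hconv : ∀ i, ConvexOn ℝ univ (ℓ i)) (hcont : ∀ i, Continuous (ℓ i)) :
    ConvexOn ℝ (closedBall 0 C ×ˢ Icc γlo γhi) fun y : E × ℝ => ogaMetaLoss ℓ Γ C y.1 y.2 := by
  have hΛ : closedBall (0 : E) C ×ˢ closedBall (0 : E) C ×ˢ Icc γlo γhi ⊆
      univ ×ˢ univ ×ˢ Ioi 0 :=
    prod_mono (subset_univ _) (prod_mono (subset_univ _) fun γ hγ => hγlo.trans_le hγ.1)
  have hΛconv :=
    (convex_closedBall (0 : E) C).prod ((convex_closedBall (0 : E) C).prod (convex_Icc γlo γhi))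
  exact ((convexOn_ogaRegretBound hconv).subset hΛ hΛconv).sInf_image_prod
    (nonempty_closedBall.2 hC) fun y _ => bddBelow_ogaRegretBound_image hcont C y

theorem ogaMetaLoss_le_add {γ γ' : ℝ} {ϑ ϑ' : E} (hC : 0 ≤ C) (hγlo : 0 < γlo)
    (hcont : ∀ i, Continuous (ℓ i)) (hϑ : ‖ϑ‖ ≤ C) (hϑ' : ‖ϑ'‖ ≤ C) (hγ : γlo ≤ γ)
    (hγ' : γlo ≤ γ') :
    ogaMetaLoss ℓ Γ C ϑ γ ≤ ogaMetaLoss ℓ Γ C ϑ' γ' +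
      √(n ^ 2 * Γ ^ 4 / 4 + 4 * C ^ 2 / γlo ^ 2 + 4 * C ^ 4 / γlo ^ 4) *
        √(‖ϑ - ϑ'‖ ^ 2 + (γ - γ') ^ 2) :=
  sInf_image_le_sInf_image_add (nonempty_closedBall.2 hC)
    (bddBelow_ogaRegretBound_image hcont C _) fun _ hθ =>
      ogaRegretBound_le_add hγlo (mem_closedBall_zero_iff.1 hθ) hϑ hϑ' hγ hγ'

theorem abs_ogaMetaLoss_sub_le {γ γ' : ℝ} {ϑ ϑ' : E} (hC : 0 ≤ C) (hγlo : 0 < γlo)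
    (hcont : ∀ i, Continuous (ℓ i)) (hϑ : ‖ϑ‖ ≤ C) (hϑ' : ‖ϑ'‖ ≤ C) (hγ : γlo ≤ γ)
    (hγ' : γlo ≤ γ') :
    |ogaMetaLoss ℓ Γ C ϑ γ - ogaMetaLoss ℓ Γ C ϑ' γ'| ≤
      √(n ^ 2 * Γ ^ 4 / 4 + 4 * C ^ 2 / γlo ^ 2 + 4 * C ^ 4 / γlo ^ 4) *
        √(‖ϑ - ϑ'‖ ^ 2 + (γ - γ') ^ 2) := by
  rw [abs_sub_le_iff, sub_le_iff_le_add', sub_le_iff_le_add']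
  refine ⟨ogaMetaLoss_le_add hC hγlo hcont hϑ hϑ' hγ hγ', ?_⟩
  rw [norm_sub_rev, ← neg_sub γ' γ, neg_sq]
  exact ogaMetaLoss_le_add hC hγlo hcont hϑ' hϑ hγ' hγ

end

theorem oga_meta_loss_convex_lipschitz_general
    (d n : ℕ)
    (Γ C γlo γhi : ℝ) (hΓ : 0 < Γ) (hC : 0 < C) (hγlo : 0 < γlo)
    (ℓ : Fin n → EuclideanSpace ℝ (Fin d) → ℝ)
    (hconv : ∀ i : Fin n, ∀ x y : EuclideanSpace ℝ (Fin d), ∀ s : ℝ, 0 ≤ s → s ≤ 1 →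
      ℓ i (s • x + (1 - s) • y) ≤ s * ℓ i x + (1 - s) * ℓ i y)
    (hlip : ∀ i : Fin n, ∀ x y : EuclideanSpace ℝ (Fin d), |ℓ i x - ℓ i y| ≤ Γ * ‖x - y‖)
    (ML : EuclideanSpace ℝ (Fin d) → ℝ → ℝ)
    (hML : ∀ ϑ : EuclideanSpace ℝ (Fin d), ∀ γ : ℝ,
      ML ϑ γ = sInf {r : ℝ | ∃ θ : EuclideanSpace ℝ (Fin d), ‖θ‖ ≤ C ∧
        r = ∑ i, ℓ i θ + γ * Γ ^ 2 * n / 2 + ‖θ - ϑ‖ ^ 2 / (2 * γ)}) :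
    (∀ ϑ ϑ' : EuclideanSpace ℝ (Fin d), ‖ϑ‖ ≤ C → ‖ϑ'‖ ≤ C →
      ∀ γ γ' : ℝ, γ ∈ Set.Icc γlo γhi → γ' ∈ Set.Icc γlo γhi →
      ∀ s : ℝ, 0 ≤ s → s ≤ 1 →
        ML (s • ϑ + (1 - s) • ϑ') (s * γ + (1 - s) * γ') ≤
          s * ML ϑ γ + (1 - s) * ML ϑ' γ') ∧
    (∀ ϑ ϑ' : EuclideanSpace ℝ (Fin d), ‖ϑ‖ ≤ C → ‖ϑ'‖ ≤ C →
      ∀ γ γ' : ℝ, γ ∈ Set.Icc γlo γhi → γ' ∈ Set.Icc γlo γhi →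
        |ML ϑ γ - ML ϑ' γ'| ≤
          Real.sqrt (n ^ 2 * Γ ^ 4 / 4 + 4 * C ^ 2 / γlo ^ 2 + 4 * C ^ 4 / γlo ^ 4) *
            Real.sqrt (‖ϑ - ϑ'‖ ^ 2 + (γ - γ') ^ 2)) := by
  have hℓconv (i : Fin n) : ConvexOn ℝ univ (ℓ i) := ⟨convex_univ, fun x _ y _ a b ha hb hab => by
    obtain rfl : b = 1 - a := by linarith
    exact hconv i x y a ha (by linarith)⟩
  have hℓcont (i : Fin n) : Continuous (ℓ i) :=
    (LipschitzWith.of_dist_le_mul (K := Γ.toNNReal) fun x y => by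
      rw [Real.coe_toNNReal _ hΓ.le, Real.dist_eq, dist_eq_norm]; exact hlip i x y).continuous
  obtain rfl : ML = ogaMetaLoss ℓ Γ C := by
    funext ϑ γ
    rw [hML, ogaMetaLoss]; congr 1; ext r; simp [ogaRegretBound, eq_comm]
  refine ⟨fun ϑ ϑ' hϑ hϑ' γ γ' hγ hγ' s hs0 hs1 => ?_, fun ϑ ϑ' hϑ hϑ' γ γ' hγ hγ' =>
    abs_ogaMetaLoss_sub_le hC.le hγlo hℓcont hϑ hϑ' hγ.1 hγ'.1⟩
  exact (convexOn_ogaMetaLoss hC.le hγlo γhi hℓconv hℓcont).2 (x := (ϑ, γ)) (y := (ϑ', γ'))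
    ⟨mem_closedBall_zero_iff.2 hϑ, hγ⟩ ⟨mem_closedBall_zero_iff.2 hϑ', hγ'⟩ hs0 (by linarith)
    (by ring)

/-- Proposition 2 of the paper: the OGA meta-loss
    L(ϑ,γ) = inf_{‖θ‖≤C} { Σᵢ ℓᵢ(θ) + γΓ²n/2 + ‖θ-ϑ‖²/(2γ) }
    is convex and √(n²Γ⁴/4 + 4C²/γ̲² + 4C⁴/γ̲⁴)-Lipschitz on
    Λ = {‖ϑ‖ ≤ C} × [γ̲, γ̄]. -/
theorem oga_meta_loss_convex_lipschitz
    (d n : ℕ) (hd : 1 ≤ d) (hn : 1 ≤ n)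
    (Γ C γlo γhi : ℝ) (hΓ : 0 < Γ) (hC : 0 < C) (hγlo : 0 < γlo) (hγ : γlo < γhi)
    (ℓ : Fin n → EuclideanSpace ℝ (Fin d) → ℝ)
    (hconv : ∀ i : Fin n, ∀ x y : EuclideanSpace ℝ (Fin d), ∀ s : ℝ, 0 ≤ s → s ≤ 1 →
      ℓ i (s • x + (1 - s) • y) ≤ s * ℓ i x + (1 - s) * ℓ i y)
    (hlip : ∀ i : Fin n, ∀ x y : EuclideanSpace ℝ (Fin d), |ℓ i x - ℓ i y| ≤ Γ * ‖x - y‖)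
    (ML : EuclideanSpace ℝ (Fin d) → ℝ → ℝ)
    (hML : ∀ ϑ : EuclideanSpace ℝ (Fin d), ∀ γ : ℝ,
      ML ϑ γ = sInf {r : ℝ | ∃ θ : EuclideanSpace ℝ (Fin d), ‖θ‖ ≤ C ∧
        r = ∑ i, ℓ i θ + γ * Γ ^ 2 * n / 2 + ‖θ - ϑ‖ ^ 2 / (2 * γ)}) :
    (∀ ϑ ϑ' : EuclideanSpace ℝ (Fin d), ‖ϑ‖ ≤ C → ‖ϑ'‖ ≤ C →
      ∀ γ γ' : ℝ, γ ∈ Set.Icc γlo γhi → γ' ∈ Set.Icc γlo γhi →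
      ∀ s : ℝ, 0 ≤ s → s ≤ 1 →
        ML (s • ϑ + (1 - s) • ϑ') (s * γ + (1 - s) * γ') ≤
          s * ML ϑ γ + (1 - s) * ML ϑ' γ') ∧
    (∀ ϑ ϑ' : EuclideanSpace ℝ (Fin d), ‖ϑ‖ ≤ C → ‖ϑ'‖ ≤ C →
      ∀ γ γ' : ℝ, γ ∈ Set.Icc γlo γhi → γ' ∈ Set.Icc γlo γhi →
        |ML ϑ γ - ML ϑ' γ'| ≤
          Real.sqrt (n ^ 2 * Γ ^ 4 / 4 + 4 * C ^ 2 / γlo ^ 2 + 4 * C ^ 4 / γlo ^ 4) *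
            Real.sqrt (‖ϑ - ϑ'‖ ^ 2 + (γ - γ') ^ 2)) :=
  oga_meta_loss_convex_lipschitz_general d n Γ C γlo γhi hΓ hC hγlo ℓ hconv hlip ML hML
end

section
/- Let d, n, T ≥ 1 be natural numbers, Γ > 0, C > 0, β > 0 with n^{-β} ≤ C². For t = 1,…,T and i = 1,…,n let ℓ_{t,i} : ℝ^d → ℝ be convex and Γ-Lipschitz. Set γ̲ = n^{-β}, γ̄ = C², Λ = {ϑ ∈ ℝ^d : ‖ϑ‖ ≤ C} × [γ̲, γ̄], L = √(n²Γ⁴/4 + 4C²/γ̲² + 4C⁴/γ̲⁴), α = (C/L)√((4+C²)/T), and L_t(ϑ,γ) = inf_{‖θ‖≤C} { Σ_{i=1}^n ℓ_{t,i}(θ) + γΓ²n/2 + ‖θ-ϑ‖²/(2γ) }. Let λ_1 ∈ Λ and, for t = 1,…,T, let λ_{t+1} ∈ Λ minimize λ ↦ L_t(λ) + ‖λ - λ_t‖²/(2α) over Λ, and suppose s_1,…,s_T ∈ ℝ satisfy s_t ≤ L_t(λ_t). Then for all θ_1,…,θ_T with ‖θ_t‖ ≤ C and all γ ∈ [γ̲,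 γ̄], writing θ̄ = (1/T)Σ_s θ_s and σ = √((1/T)Σ_t ‖θ_t - θ̄‖²): Σ_{t=1}^T s_t ≤ Σ_{t=1}^T Σ_{i=1}^n ℓ_{t,i}(θ_t) + γΓ²nT/2 + Tσ²/(2γ) + C L √((4+C²)T). -/
/-
The meta-loss `L_t(ϑ, γ)` is a partial minimum over `θ` of a function that is jointly convex in
`(θ, ϑ, γ)` (the perspective `‖θ - ϑ‖² / (2γ)` of the square norm is), hence convex on `Λ`; on `Λ`,
where `γ ≥ γ̲` and all points lie in a ball of radius `C`, it is moreover `L`-Lipschitz for the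
Euclidean norm of `ℝᵈ × ℝ`. The meta-parameters are the iterates of the online proximal point
method on `Λ`. The three-point inequality for a proximal step, together with the Lipschitz bound
and AM-GM, gives `L_t(λ_t) ≤ L_t(λ) + (‖λ - λ_t‖² - ‖λ - λ_{t+1}‖²) / (2α) + αL² / 2`, which
telescopes. Choosing `λ = (θ̄, γ)`, bounding `L_t(λ)` by its value at `θ = θ_t`, and
`‖λ - λ_1‖² ≤ C²(4 + C²)` gives the bound, the two error terms being balanced by the choice of `α`.
The infimum defining `L_t` is finite since a convex function on `ℝᵈ` is continuous.
-/

open Finset Filter Topology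

section ProximalPoint

variable {V : Type*} [NormedAddCommGroup V] [InnerProductSpace ℝ V]

lemma norm_smul_add_one_sub_smul_sq (u v : V) (c : ℝ) :
    ‖c • u + (1 - c) • v‖ ^ 2 = c * ‖u‖ ^ 2 + (1 - c) * ‖v‖ ^ 2 - c * (1 - c) * ‖u - v‖ ^ 2 := by
  rw [norm_add_sq_real, norm_sub_sq_real, norm_smul, norm_smul, inner_smul_left,
    inner_smul_right, mul_pow, mul_pow, Real.norm_eq_abs, Real.norm_eq_abs, sq_abs, sq_abs]
  simp only [RCLike.conj_to_real]
  ring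

theorem ConvexOn.prox_three_point {S : Set V} {F : V → ℝ} (hF : ConvexOn ℝ S F) {α : ℝ}
    {x₀ x₁ y : V} (hx₁ : x₁ ∈ S) (hy : y ∈ S)
    (hmin : ∀ z ∈ S, F x₁ + ‖x₁ - x₀‖ ^ 2 / (2 * α) ≤ F z + ‖z - x₀‖ ^ 2 / (2 * α)) :
    F x₁ + ‖x₁ - x₀‖ ^ 2 / (2 * α) + ‖y - x₁‖ ^ 2 / (2 * α) ≤
      F y + ‖y - x₀‖ ^ 2 / (2 * α) := by
  set A := F x₁ + ‖x₁ - x₀‖ ^ 2 / (2 * α)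
  set B := F y + ‖y - x₀‖ ^ 2 / (2 * α)
  set K := ‖y - x₁‖ ^ 2 / (2 * α)
  -- compare `x₁` with `c • y + (1 - c) • x₁` and divide by `c`, then let `c → 0`
  have hsegment : ∀ c ∈ Set.Ioo (0 : ℝ) 1, A + (1 - c) * K ≤ B := by
    rintro c ⟨hc0, hc1⟩
    have hz := hmin _ (hF.1 hy hx₁ hc0.le (sub_nonneg.2 hc1.le) (add_sub_cancel c 1))
    have hFz := hF.2 hy hx₁ hc0.le (sub_nonneg.2 hc1.le) (add_sub_cancel c 1)
    rw [show c • y + (1 - c) • x₁ - x₀ = c • (y - x₀) + (1 - c) • (x₁ - x₀) by module,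
      norm_smul_add_one_sub_smul_sq, sub_sub_sub_cancel_right] at hz
    simp only [smul_eq_mul] at hFz
    have hsplit : (c * ‖y - x₀‖ ^ 2 + (1 - c) * ‖x₁ - x₀‖ ^ 2 - c * (1 - c) * ‖y - x₁‖ ^ 2) /
        (2 * α) = c * (‖y - x₀‖ ^ 2 / (2 * α)) + (1 - c) * (‖x₁ - x₀‖ ^ 2 / (2 * α)) -
          c * (1 - c) * K := by ring
    rw [hsplit] at hz
    have hc : c * (A + (1 - c) * K) ≤ c * B := by linarith
    exact le_of_mul_le_mul_left hc hc0
  have hlim : Tendsto (fun c : ℝ => A + (1 - c) * K) (𝓝[>] 0) (𝓝 (A + K)) := by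
    have h : Tendsto (fun c : ℝ => A + (1 - c) * K) (𝓝 0) (𝓝 (A + (1 - 0) * K)) :=
      (Continuous.tendsto (by fun_prop) 0)
    simpa using h.mono_left nhdsWithin_le_nhds
  exact le_of_tendsto hlim (eventually_of_mem (Ioo_mem_nhdsGT one_pos) hsegment)

theorem ConvexOn.prox_step_regret {S : Set V} {F : V → ℝ} (hF : ConvexOn ℝ S F) {α L : ℝ}
    (hα : 0 < α) (hLip : ∀ x ∈ S, ∀ y ∈ S, F x ≤ F y + L * ‖x - y‖) {x₀ x₁ y : V}
    (hx₀ : x₀ ∈ S) (hx₁ : x₁ ∈ S) (hy : y ∈ S)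
    (hmin : ∀ z ∈ S, F x₁ + ‖x₁ - x₀‖ ^ 2 / (2 * α) ≤ F z + ‖z - x₀‖ ^ 2 / (2 * α)) :
    F x₀ ≤ F y + (‖y - x₀‖ ^ 2 - ‖y - x₁‖ ^ 2) / (2 * α) + α * L ^ 2 / 2 := by
  have hthree := hF.prox_three_point hx₁ hy hmin
  have hamgm : L * ‖x₀ - x₁‖ ≤ ‖x₁ - x₀‖ ^ 2 / (2 * α) + α * L ^ 2 / 2 := by
    rw [norm_sub_rev, div_add' _ _ _ (by positivity), le_div_iff₀ (by positivity)]
    nlinarith [sq_nonneg (‖x₁ - x₀‖ - α * L)]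
  have hsplit : (‖y - x₀‖ ^ 2 - ‖y - x₁‖ ^ 2) / (2 * α) =
      ‖y - x₀‖ ^ 2 / (2 * α) - ‖y - x₁‖ ^ 2 / (2 * α) := sub_div _ _ _
  linarith [hLip x₀ hx₀ x₁ hx₁]

theorem proximal_point_regret {S : Set V} {F : ℕ → V → ℝ} {α L : ℝ} {T : ℕ} (hα : 0 < α)
    (hF : ∀ t ∈ Icc 1 T, ConvexOn ℝ S (F t))
    (hLip : ∀ t ∈ Icc 1 T, ∀ x ∈ S, ∀ y ∈ S, F t x ≤ F t y + L * ‖x - y‖)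
    {x : ℕ → V} (hx₁ : x 1 ∈ S) (hxS : ∀ t ∈ Icc 1 T, x (t + 1) ∈ S)
    (hmin : ∀ t ∈ Icc 1 T, ∀ z ∈ S, F t (x (t + 1)) + ‖x (t + 1) - x t‖ ^ 2 / (2 * α) ≤
      F t z + ‖z - x t‖ ^ 2 / (2 * α))
    {y : V} (hy : y ∈ S) :
    ∑ t ∈ Icc 1 T, F t (x t) ≤
      ∑ t ∈ Icc 1 T, F t y + ‖y - x 1‖ ^ 2 / (2 * α) + T * (α * L ^ 2 / 2) := by
  obtain rfl | hT := Nat.eq_zero_or_pos T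
  · simp only [Icc_eq_empty_of_lt one_pos, sum_empty, CharP.cast_eq_zero, zero_mul, add_zero,
      zero_add]
    positivity
  have hxt : ∀ t ∈ Icc 1 T, x t ∈ S := by
    intro t ht
    obtain _ | _ | s := t
    · simp at ht
    · exact hx₁
    · exact hxS (s + 1) (by simp only [mem_Icc] at ht ⊢; omega)
  set D : ℕ → ℝ := fun t => ‖y - x t‖ ^ 2
  have hstep : ∀ t ∈ Icc 1 T,
      F t (x t) ≤ F t y + (D t - D (t + 1)) / (2 * α) + α * L ^ 2 / 2 := fun t ht =>
    (hF t ht).prox_step_regret hα (hLip t ht) (hxt t ht) (hxS t ht) hy (hmin t ht)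
  have htelescope : ∑ t ∈ Icc 1 T, (D t - D (t + 1)) = D 1 - D (T + 1) := by
    rw [← neg_sub, ← sum_Icc_sub hT, ← sum_neg_distrib]
    simp only [neg_sub]
  calc ∑ t ∈ Icc 1 T, F t (x t)
      ≤ ∑ t ∈ Icc 1 T, (F t y + (D t - D (t + 1)) / (2 * α) + α * L ^ 2 / 2) := sum_le_sum hstep
    _ = ∑ t ∈ Icc 1 T, F t y + (D 1 - D (T + 1)) / (2 * α) + T * (α * L ^ 2 / 2) := by
      rw [sum_add_distrib, sum_add_distrib, ← sum_div, htelescope, sum_const, Nat.card_Icc,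
        nsmul_eq_mul, Nat.add_sub_cancel]
    _ ≤ _ := by gcongr; exact sub_le_self _ (sq_nonneg _)

end ProximalPoint

section PartialInfimum

variable {X Y : Type*}

lemma sInf_image_le_sInf_image_add_s9 {K : Set X} (f : X → Y → ℝ) (hK : K.Nonempty) {y y' : Y}
    {c : ℝ} (hbdd : BddBelow ((fun x => f x y) '' K)) (hle : ∀ x ∈ K, f x y ≤ f x y' + c) :
    sInf ((fun x => f x y) '' K) ≤ sInf ((fun x => f x y') '' K) + c := by
  rw [← sub_le_iff_le_add]
  refine le_csInf (hK.image _) ?_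
  rintro _ ⟨x, hx, rfl⟩
  rw [sub_le_iff_le_add]
  exact (csInf_le hbdd ⟨x, hx, rfl⟩).trans (hle x hx)

variable [AddCommGroup X] [Module ℝ X] [AddCommGroup Y] [Module ℝ Y]

theorem ConvexOn.sInf_image {K : Set X} {S : Set Y} {f : X → Y → ℝ}
    (hf : ConvexOn ℝ (K ×ˢ S) (fun q => f q.1 q.2)) (hK : K.Nonempty)
    (hbdd : ∀ y ∈ S, BddBelow ((fun x => f x y) '' K)) :
    ConvexOn ℝ S (fun y => sInf ((fun x => f x y) '' K)) := by
  refine ⟨by simpa [Set.snd_image_prod hK] using hf.1.linear_image (LinearMap.snd ℝ X Y), ?_⟩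
  intro y hy y' hy' a b ha hb hab
  refine le_of_forall_pos_le_add fun ε hε => ?_
  obtain ⟨_, ⟨x, hx, rfl⟩, hxε⟩ :=
    exists_lt_of_csInf_lt (hK.image _) (lt_add_of_pos_right (sInf ((fun x => f x y) '' K)) hε)
  obtain ⟨_, ⟨x', hx', rfl⟩, hx'ε⟩ :=
    exists_lt_of_csInf_lt (hK.image _) (lt_add_of_pos_right (sInf ((fun x => f x y') '' K)) hε)
  have hmem := hf.1 (Set.mk_mem_prod hx hy) (Set.mk_mem_prod hx' hy') ha hb hab
  calc sInf ((fun x => f x (a • y + b • y')) '' K)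
      ≤ f (a • x + b • x') (a • y + b • y') := csInf_le (hbdd _ hmem.2) ⟨_, hmem.1, rfl⟩
    _ ≤ a * f x y + b * f x' y' := hf.2 (Set.mk_mem_prod hx hy) (Set.mk_mem_prod hx' hy') ha hb hab
    _ ≤ a * (sInf ((fun x => f x y) '' K) + ε) + b * (sInf ((fun x => f x y') '' K) + ε) := by
      gcongr
    _ = _ := by rw [smul_eq_mul, smul_eq_mul]; linear_combination ε * hab

end PartialInfimum

lemma sq_add_div_add_le_s9 {u v g g' a b : ℝ} (hg : 0 < g) (hg' : 0 < g') (ha : 0 ≤ a)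
    (hb : 0 ≤ b) (hab : 0 < a * g + b * g') :
    (a * u + b * v) ^ 2 / (a * g + b * g') ≤ a * (u ^ 2 / g) + b * (v ^ 2 / g') := by
  rw [div_le_iff₀ hab]
  have hrhs : (a * (u ^ 2 / g) + b * (v ^ 2 / g')) * (a * g + b * g') =
      (a * u + b * v) ^ 2 + a * b * (u * g' - v * g) ^ 2 / (g * g') := by
    field_simp
    ring
  rw [hrhs]
  have : 0 ≤ a * b * (u * g' - v * g) ^ 2 / (g * g') := by positivity
  linarith

lemma mul_add_mul_le_sqrt_mul_sqrt_s9 (x y u v : ℝ) :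
    x * u + y * v ≤ √(x ^ 2 + y ^ 2) * √(u ^ 2 + v ^ 2) := by
  simpa [Fin.sum_univ_two] using Real.sum_mul_le_sqrt_mul_sqrt univ ![x, y] ![u, v]

lemma abs_sub_sq_div_mul_le {a u γ γ' γlo C : ℝ} (ha : 0 ≤ a) (hγlo : 0 < γlo) (hγ : γlo ≤ γ)
    (hγ' : γlo ≤ γ') (hu : 0 ≤ u) (huC : u ≤ 2 * C) :
    |a - u ^ 2 / (2 * (γ * γ'))| ≤ √(a ^ 2 + (2 * C ^ 2 / γlo ^ 2) ^ 2) := by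
  have hq : u ^ 2 / (2 * (γ * γ')) ≤ 2 * C ^ 2 / γlo ^ 2 := by
    rw [div_le_div_iff₀ (by nlinarith) (by positivity)]
    have hγsq : γlo ^ 2 ≤ γ * γ' := by nlinarith
    have husq : u ^ 2 ≤ 4 * C ^ 2 := by nlinarith
    nlinarith [mul_le_mul husq hγsq (sq_nonneg γlo) (by positivity)]
  have hq₀ : 0 ≤ u ^ 2 / (2 * (γ * γ')) := div_nonneg (sq_nonneg u) (by nlinarith)
  have haM : a ≤ √(a ^ 2 + (2 * C ^ 2 / γlo ^ 2) ^ 2) := Real.le_sqrt_of_sq_le (by nlinarith)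
  have hbM : 2 * C ^ 2 / γlo ^ 2 ≤ √(a ^ 2 + (2 * C ^ 2 / γlo ^ 2) ^ 2) :=
    Real.le_sqrt_of_sq_le (by nlinarith)
  exact abs_le.2 ⟨by linarith, by linarith⟩

lemma sq_sub_sq_div_le {u u' δ γ γlo C : ℝ} (hγlo : 0 < γlo) (hγ : γlo ≤ γ) (hu : 0 ≤ u)
    (hu' : 0 ≤ u') (huC : u ≤ 2 * C) (hu'C : u' ≤ 2 * C) (hδ : 0 ≤ δ) (huu' : u - u' ≤ δ) :
    (u ^ 2 - u' ^ 2) / (2 * γ) ≤ 2 * C / γlo * δ := by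
  have hnum : u ^ 2 - u' ^ 2 ≤ 4 * C * δ := by nlinarith
  calc (u ^ 2 - u' ^ 2) / (2 * γ) ≤ 4 * C * δ / (2 * γ) := by gcongr; linarith
    _ ≤ 4 * C * δ / (2 * γlo) := by gcongr; nlinarith
    _ = 2 * C / γlo * δ := by field_simp; ring

lemma tuned_step_size_bound {C K L T : ℝ} (hC : 0 < C) (hK : 0 < K) (hL : 0 < L) (hT : 0 < T) :
    C ^ 2 * K / (2 * (C / L * √(K / T))) + T * (C / L * √(K / T) * L ^ 2 / 2) =
      C * L * √(K * T) := by
  have hsqrt : √(K / T) = √(K * T) / T := by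
    rw [show K / T = K * T / T ^ 2 by field_simp, Real.sqrt_div' _ (by positivity),
      Real.sqrt_sq hT.le]
  have hKT : √(K * T) ^ 2 = K * T := Real.sq_sqrt (by positivity)
  rw [hsqrt]
  field_simp
  rw [hKT]; ring

lemma convexOn_sum {E ι : Type*} [AddCommGroup E] [Module ℝ E] {S : Set E} (hS : Convex ℝ S)
    {s : Finset ι} {f : ι → E → ℝ} (hf : ∀ i ∈ s, ConvexOn ℝ S (f i)) :
    ConvexOn ℝ S (fun x => ∑ i ∈ s, f i x) := by
  induction s using Finset.cons_induction with
  | empty => simpa using convexOn_const (0 : ℝ) hS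
  | cons i s hi ih =>
    simp only [sum_cons]
    exact (hf i (mem_cons_self i s)).add (ih fun j hj => hf j (mem_cons_of_mem hj))

lemma convexOn_univ_of_convexComb_le {E : Type*} [AddCommGroup E] [Module ℝ E] {f : E → ℝ}
    (hf : ∀ x y : E, ∀ c : ℝ, 0 ≤ c → c ≤ 1 → f (c • x + (1 - c) • y) ≤ c * f x + (1 - c) * f y) :
    ConvexOn ℝ Set.univ f :=
  ⟨convex_univ, fun x _ y _ c c' hc hc' hcc' => by
    obtain rfl := eq_sub_of_add_eq' hcc'
    exact hf x y c hc (by linarith)⟩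

lemma norm_average_le {E ι : Type*} [SeminormedAddCommGroup E] [NormedSpace ℝ E] {s : Finset ι}
    (hs : s.Nonempty) {v : ι → E} {C : ℝ} (hv : ∀ i ∈ s, ‖v i‖ ≤ C) :
    ‖(1 / (#s : ℝ)) • ∑ i ∈ s, v i‖ ≤ C := by
  have hmean := (convex_closedBall (0 : E) C).sum_mem (t := s) (w := fun _ => 1 / (#s : ℝ))
    (fun _ _ => by positivity) (by simp [hs.card_pos.ne'])
    fun i hi => mem_closedBall_zero_iff.2 (hv i hi)
  simpa [smul_sum] using hmean

section OGDBound

variable {E : Type*} [NormedAddCommGroup E]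

lemma WithLp.prod_norm_sub_sq (p q : WithLp 2 (E × ℝ)) :
    ‖p - q‖ ^ 2 = ‖p.fst - q.fst‖ ^ 2 + (p.snd - q.snd) ^ 2 := by
  rw [WithLp.prod_norm_sq_eq_of_L2, WithLp.sub_fst, WithLp.sub_snd, Real.norm_eq_abs, sq_abs]

/-- With `g` the cumulative loss of a task and `a = Γ²n/2`, `ogdBound g a θ (ϑ, γ)` is the loss of
the comparator `θ` plus the regret bound `γΓ²n/2 + ‖θ - ϑ‖²/(2γ)` of online gradient descent started
at `ϑ` with step size `γ`. Meta-parameters live in `WithLp 2 (E × ℝ)` so that their distance is the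
Euclidean one `‖ϑ - ϑ'‖² + (γ - γ')²` of the proximal step. -/
noncomputable def ogdBound (g : E → ℝ) (a : ℝ) (θ : E) (p : WithLp 2 (E × ℝ)) : ℝ :=
  g θ + p.snd * a + ‖θ - p.fst‖ ^ 2 / (2 * p.snd)

/-- The paper's meta-loss `L_t(ϑ, γ)`. -/
noncomputable def metaLoss (g : E → ℝ) (a C : ℝ) (p : WithLp 2 (E × ℝ)) : ℝ :=
  sInf ((fun θ => ogdBound g a θ p) '' Metric.closedBall 0 C)

/-- The paper's `Λ`. -/
def metaDomain (C γlo γhi : ℝ) : Set (WithLp 2 (E × ℝ)) :=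
  {p | ‖p.fst‖ ≤ C ∧ p.snd ∈ Set.Icc γlo γhi}

/-- The Lipschitz constant of `metaLoss` on `metaDomain`. -/
noncomputable def metaLipschitzConst (a C γlo : ℝ) : ℝ :=
  √(a ^ 2 + (2 * C ^ 2 / γlo ^ 2) ^ 2 + (2 * C / γlo) ^ 2)

lemma ogdBound_le_add_mul_norm_sub (g : E → ℝ) {a C γlo : ℝ} (ha : 0 ≤ a) (hγlo : 0 < γlo)
    {θ : E} (hθ : ‖θ‖ ≤ C) {p p' : WithLp 2 (E × ℝ)} (hϑ : ‖p.fst‖ ≤ C) (hϑ' : ‖p'.fst‖ ≤ C)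
    (hγ : γlo ≤ p.snd) (hγ' : γlo ≤ p'.snd) :
    ogdBound g a θ p ≤
      ogdBound g a θ p' + metaLipschitzConst a C γlo * ‖p - p'‖ := by
  set u := ‖θ - p.fst‖
  set u' := ‖θ - p'.fst‖
  set δ := ‖p.fst - p'.fst‖
  have hu : u ≤ 2 * C := (norm_sub_le _ _).trans (by linarith)
  have hu' : u' ≤ 2 * C := (norm_sub_le _ _).trans (by linarith)
  have huu' : u - u' ≤ δ := by
    simpa [u, u', δ, norm_sub_rev p'.fst] using norm_sub_norm_le (θ - p.fst) (θ - p'.fst)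
  have hdecomp : ogdBound g a θ p - ogdBound g a θ p' =
      (p.snd - p'.snd) * (a - u' ^ 2 / (2 * (p.snd * p'.snd))) +
        (u ^ 2 - u' ^ 2) / (2 * p.snd) := by
    have hpos : 0 < p.snd := hγlo.trans_le hγ
    have hpos' : 0 < p'.snd := hγlo.trans_le hγ'
    simp only [ogdBound, u, u']
    field_simp
    ring
  set M := √(a ^ 2 + (2 * C ^ 2 / γlo ^ 2) ^ 2)
  have hstep : (p.snd - p'.snd) * (a - u' ^ 2 / (2 * (p.snd * p'.snd))) ≤
      M * |p.snd - p'.snd| :=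
    calc _ ≤ |p.snd - p'.snd| * |a - u' ^ 2 / (2 * (p.snd * p'.snd))| := by
          rw [← abs_mul]; exact le_abs_self _
      _ ≤ |p.snd - p'.snd| * M := by
          gcongr; exact abs_sub_sq_div_mul_le ha hγlo hγ hγ' (norm_nonneg _) hu'
      _ = M * |p.snd - p'.snd| := mul_comm _ _
  have hcentre :=
    sq_sub_sq_div_le hγlo hγ (norm_nonneg _) (norm_nonneg _) hu hu' (norm_nonneg _) huu'
  have hnorm : ‖p - p'‖ = √(|p.snd - p'.snd| ^ 2 + δ ^ 2) := by
    rw [← Real.sqrt_sq (norm_nonneg _), WithLp.prod_norm_sub_sq, sq_abs, add_comm]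
  have hCS := mul_add_mul_le_sqrt_mul_sqrt_s9 M (2 * C / γlo) |p.snd - p'.snd| δ
  rw [Real.sq_sqrt (by positivity), ← hnorm] at hCS
  rw [metaLipschitzConst]
  linarith

lemma norm_sub_sq_le_of_mem_metaDomain {C γlo γhi : ℝ} (hγlo : 0 ≤ γlo) {p q : WithLp 2 (E × ℝ)}
    (hp : p ∈ metaDomain C γlo γhi) (hq : q ∈ metaDomain C γlo γhi) :
    ‖p - q‖ ^ 2 ≤ 4 * C ^ 2 + γhi ^ 2 := by
  obtain ⟨hp₁, hp₂, hp₂'⟩ := hp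
  obtain ⟨hq₁, hq₂, hq₂'⟩ := hq
  have hfst : ‖p.fst - q.fst‖ ≤ 2 * C := (norm_sub_le _ _).trans (by linarith)
  rw [WithLp.prod_norm_sub_sq]
  nlinarith [norm_nonneg (p.fst - q.fst)]

lemma metaLoss_eq_sInf (g : E → ℝ) (Γ C : ℝ) (n : ℕ)
    (p : WithLp 2 (E × ℝ)) :
    metaLoss g (Γ ^ 2 * n / 2) C p = sInf {r : ℝ | ∃ θ : E, ‖θ‖ ≤ C ∧
      r = g θ + p.snd * Γ ^ 2 * n / 2 + ‖θ - p.fst‖ ^ 2 / (2 * p.snd)} := by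
  unfold metaLoss ogdBound
  congr 1
  ext r
  simp only [Set.mem_image, Metric.mem_closedBall, dist_zero_right, Set.mem_ofPred_eq]
  refine exists_congr fun θ => and_congr_right fun _ => ?_
  rw [eq_comm, mul_div_assoc', mul_assoc]

variable [NormedSpace ℝ E]

lemma convex_setOf_snd_pos : Convex ℝ {p : WithLp 2 (E × ℝ) | 0 < p.snd} :=
  convex_halfSpace_gt (WithLp.sndₗ 2 ℝ E ℝ).isLinear 0

lemma convex_metaDomain (C γlo γhi : ℝ) :
    Convex ℝ (metaDomain C γlo γhi : Set (WithLp 2 (E × ℝ))) := by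
  have hpre : (metaDomain C γlo γhi : Set (WithLp 2 (E × ℝ))) =
      WithLp.fstₗ 2 ℝ E ℝ ⁻¹' Metric.closedBall 0 C ∩ WithLp.sndₗ 2 ℝ E ℝ ⁻¹' Set.Icc γlo γhi := by
    ext p
    simp [metaDomain]
  rw [hpre]
  exact ((convex_closedBall 0 C).linear_preimage _).inter ((convex_Icc γlo γhi).linear_preimage _)

lemma convexOn_ogdBound {g : E → ℝ} (hg : ConvexOn ℝ Set.univ g) (a : ℝ) :
    ConvexOn ℝ (Set.univ ×ˢ {p : WithLp 2 (E × ℝ) | 0 < p.snd})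
      (fun q => ogdBound g a q.1 q.2) := by
  refine ⟨convex_univ.prod convex_setOf_snd_pos, ?_⟩
  rintro ⟨θ, p⟩ ⟨-, hp : 0 < p.snd⟩ ⟨θ', p'⟩ ⟨-, hp' : 0 < p'.snd⟩ b b' hb hb' hbb'
  have hloss := hg.2 (Set.mem_univ θ) (Set.mem_univ θ') hb hb' hbb'
  have hmix : 0 < b * (2 * p.snd) + b' * (2 * p'.snd) := by
    rcases hb.eq_or_lt with rfl | hb₀
    · rw [zero_add] at hbb'
      simpa [hbb'] using hp'
    · positivity
  have hdist : ‖(b • θ + b' • θ') - (b • p.fst + b' • p'.fst)‖ ≤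
      b * ‖θ - p.fst‖ + b' * ‖θ' - p'.fst‖ := by
    rw [show (b • θ + b' • θ') - (b • p.fst + b' • p'.fst) =
      b • (θ - p.fst) + b' • (θ' - p'.fst) by module]
    refine (norm_add_le _ _).trans_eq ?_
    rw [norm_smul, norm_smul, Real.norm_of_nonneg hb, Real.norm_of_nonneg hb']
  have hpersp : ‖(b • θ + b' • θ') - (b • p.fst + b' • p'.fst)‖ ^ 2 /
      (b * (2 * p.snd) + b' * (2 * p'.snd)) ≤
        b * (‖θ - p.fst‖ ^ 2 / (2 * p.snd)) + b' * (‖θ' - p'.fst‖ ^ 2 / (2 * p'.snd)) :=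
    (div_le_div_of_nonneg_right (pow_le_pow_left₀ (norm_nonneg _) hdist 2) hmix.le).trans
      (sq_add_div_add_le_s9 (by positivity) (by positivity) hb hb' hmix)
  simp only [ogdBound, Prod.smul_mk, Prod.mk_add_mk, WithLp.add_fst, WithLp.add_snd,
    WithLp.smul_fst, WithLp.smul_snd, smul_eq_mul] at hloss hpersp ⊢
  rw [show 2 * (b * p.snd + b' * p'.snd) = b * (2 * p.snd) + b' * (2 * p'.snd) by ring]
  linarith

end OGDBound

section MetaLoss

variable {E : Type*} [NormedAddCommGroup E] [NormedSpace ℝ E] [FiniteDimensional ℝ E]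

lemma bddBelow_ogdBound_image {g : E → ℝ} (hg : ConvexOn ℝ Set.univ g) (a C : ℝ)
    (p : WithLp 2 (E × ℝ)) : BddBelow ((fun θ => ogdBound g a θ p) '' Metric.closedBall 0 C) := by
  have hgc : Continuous g := hg.locallyLipschitz.continuous
  exact (isCompact_closedBall 0 C).bddBelow_image (by unfold ogdBound; fun_prop)

lemma metaLoss_le_ogdBound {g : E → ℝ} (hg : ConvexOn ℝ Set.univ g) (a : ℝ) {C : ℝ} {θ : E}
    (hθ : ‖θ‖ ≤ C) (p : WithLp 2 (E × ℝ)) : metaLoss g a C p ≤ ogdBound g a θ p :=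
  csInf_le (bddBelow_ogdBound_image hg a C p) ⟨θ, mem_closedBall_zero_iff.2 hθ, rfl⟩

lemma convexOn_metaLoss {g : E → ℝ} (hg : ConvexOn ℝ Set.univ g) (a : ℝ) {C : ℝ} (hC : 0 ≤ C) :
    ConvexOn ℝ {p : WithLp 2 (E × ℝ) | 0 < p.snd} (metaLoss g a C) :=
  ConvexOn.sInf_image ((convexOn_ogdBound hg a).subset (Set.prod_mono (Set.subset_univ _) le_rfl)
      ((convex_closedBall 0 C).prod convex_setOf_snd_pos))
    (Metric.nonempty_closedBall.2 hC) fun p _ => bddBelow_ogdBound_image hg a C p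

lemma metaLoss_le_add_mul_norm_sub {g : E → ℝ} (hg : ConvexOn ℝ Set.univ g) {a C γlo γhi : ℝ}
    (ha : 0 ≤ a) (hγlo : 0 < γlo) {p p' : WithLp 2 (E × ℝ)} (hp : p ∈ metaDomain C γlo γhi)
    (hp' : p' ∈ metaDomain C γlo γhi) :
    metaLoss g a C p ≤
      metaLoss g a C p' + metaLipschitzConst a C γlo * ‖p - p'‖ :=
  sInf_image_le_sInf_image_add_s9 (fun θ p => ogdBound g a θ p)
    (Metric.nonempty_closedBall.2 ((norm_nonneg _).trans hp.1)) (bddBelow_ogdBound_image hg a C p)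
    fun _ hθ => ogdBound_le_add_mul_norm_sub g ha hγlo (mem_closedBall_zero_iff.1 hθ) hp.1 hp'.1
      hp.2.1 hp'.2.1

end MetaLoss

section MetaLearning

variable {E : Type*} [NormedAddCommGroup E] [InnerProductSpace ℝ E] [FiniteDimensional ℝ E]

theorem metaLoss_proximal_regret {g : ℕ → E → ℝ} {a C γlo γhi α : ℝ} {T : ℕ}
    (hg : ∀ t ∈ Icc 1 T, ConvexOn ℝ Set.univ (g t)) (ha : 0 ≤ a) (hγlo : 0 < γlo)
    (hα : 0 < α) {x : ℕ → WithLp 2 (E × ℝ)} (hx₁ : x 1 ∈ metaDomain C γlo γhi)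
    (hxS : ∀ t ∈ Icc 1 T, x (t + 1) ∈ metaDomain C γlo γhi)
    (hmin : ∀ t ∈ Icc 1 T, ∀ z ∈ metaDomain C γlo γhi,
      metaLoss (g t) a C (x (t + 1)) + ‖x (t + 1) - x t‖ ^ 2 / (2 * α) ≤
        metaLoss (g t) a C z + ‖z - x t‖ ^ 2 / (2 * α))
    {y : WithLp 2 (E × ℝ)} (hy : y ∈ metaDomain C γlo γhi) :
    ∑ t ∈ Icc 1 T, metaLoss (g t) a C (x t) ≤
      ∑ t ∈ Icc 1 T, metaLoss (g t) a C y + ‖y - x 1‖ ^ 2 / (2 * α) +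
        T * (α * metaLipschitzConst a C γlo ^ 2 / 2) := by
  have hconv : ∀ t ∈ Icc 1 T, ConvexOn ℝ (metaDomain C γlo γhi) (metaLoss (g t) a C) :=
    fun t ht => (convexOn_metaLoss (hg t ht) a ((norm_nonneg _).trans hx₁.1)).subset
      (fun _ hp => hγlo.trans_le hp.2.1) (convex_metaDomain C γlo γhi)
  have hlip : ∀ t ∈ Icc 1 T, ∀ p ∈ metaDomain C γlo γhi, ∀ p' ∈ metaDomain C γlo γhi,
      metaLoss (g t) a C p ≤ metaLoss (g t) a C p' +
        metaLipschitzConst a C γlo * ‖p - p'‖ :=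
    fun t ht _ hp _ hp' => metaLoss_le_add_mul_norm_sub (hg t ht) ha hγlo hp hp'
  exact proximal_point_regret (F := fun t => metaLoss (g t) a C) hα hconv hlip hx₁ hxS hmin hy

theorem sum_metaLoss_le_sum_ogdBound {g : ℕ → E → ℝ} {a C γlo γhi α : ℝ} {T : ℕ}
    (hg : ∀ t ∈ Icc 1 T, ConvexOn ℝ Set.univ (g t)) (ha : 0 ≤ a) (hγlo : 0 < γlo)
    (hα : 0 < α) {x : ℕ → WithLp 2 (E × ℝ)} (hx₁ : x 1 ∈ metaDomain C γlo γhi)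
    (hxS : ∀ t ∈ Icc 1 T, x (t + 1) ∈ metaDomain C γlo γhi)
    (hmin : ∀ t ∈ Icc 1 T, ∀ z ∈ metaDomain C γlo γhi,
      metaLoss (g t) a C (x (t + 1)) + ‖x (t + 1) - x t‖ ^ 2 / (2 * α) ≤
        metaLoss (g t) a C z + ‖z - x t‖ ^ 2 / (2 * α))
    {θ : ℕ → E} (hθ : ∀ t ∈ Icc 1 T, ‖θ t‖ ≤ C)
    {y : WithLp 2 (E × ℝ)} (hy : y ∈ metaDomain C γlo γhi) :
    ∑ t ∈ Icc 1 T, metaLoss (g t) a C (x t) ≤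
      ∑ t ∈ Icc 1 T, ogdBound (g t) a (θ t) y + (4 * C ^ 2 + γhi ^ 2) / (2 * α) +
        T * (α * metaLipschitzConst a C γlo ^ 2 / 2) := by
  refine (metaLoss_proximal_regret hg ha hγlo hα hx₁ hxS hmin hy).trans ?_
  gcongr with t ht
  · exact metaLoss_le_ogdBound (hg t ht) a (hθ t ht) y
  · exact norm_sub_sq_le_of_mem_metaDomain hγlo.le hy hx₁

end MetaLearning

theorem oga_meta_learning_regret_intermediate_general
    (d n T : ℕ) (hn : 1 ≤ n) (hT : 1 ≤ T)
    (Γ C β : ℝ) (hC : 0 < C)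
    (ℓ : ℕ → ℕ → EuclideanSpace ℝ (Fin d) → ℝ)
    (hconv : ∀ t ∈ Finset.Icc 1 T, ∀ i ∈ Finset.Icc 1 n,
      ∀ x y : EuclideanSpace ℝ (Fin d), ∀ c : ℝ, 0 ≤ c → c ≤ 1 →
        ℓ t i (c • x + (1 - c) • y) ≤ c * ℓ t i x + (1 - c) * ℓ t i y)
    (γlo γhi L α : ℝ)
    (hγlo : γlo = (n : ℝ) ^ (-β)) (hγhi : γhi = C ^ 2)
    (hLdef : L = Real.sqrt ((n : ℝ) ^ 2 * Γ ^ 4 / 4 + 4 * C ^ 2 / γlo ^ 2 +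
      4 * C ^ 4 / γlo ^ 4))
    (hαdef : α = (C / L) * Real.sqrt ((4 + C ^ 2) / T))
    (ML : ℕ → EuclideanSpace ℝ (Fin d) → ℝ → ℝ)
    (hML : ∀ t ∈ Finset.Icc 1 T, ∀ ϑ : EuclideanSpace ℝ (Fin d), ∀ γ : ℝ,
      ML t ϑ γ = sInf {r : ℝ | ∃ θ : EuclideanSpace ℝ (Fin d), ‖θ‖ ≤ C ∧
        r = ∑ i ∈ Finset.Icc 1 n, ℓ t i θ + γ * Γ ^ 2 * n / 2 + ‖θ - ϑ‖ ^ 2 / (2 * γ)})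
    (lam : ℕ → EuclideanSpace ℝ (Fin d) × ℝ)
    (hlam1 : ‖(lam 1).1‖ ≤ C ∧ (lam 1).2 ∈ Set.Icc γlo γhi)
    (hmem : ∀ t ∈ Finset.Icc 1 T,
      ‖(lam (t + 1)).1‖ ≤ C ∧ (lam (t + 1)).2 ∈ Set.Icc γlo γhi)
    (hmin : ∀ t ∈ Finset.Icc 1 T, ∀ ϑ : EuclideanSpace ℝ (Fin d), ‖ϑ‖ ≤ C →
      ∀ γ ∈ Set.Icc γlo γhi,
      ML t (lam (t + 1)).1 (lam (t + 1)).2 +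
        (‖(lam (t + 1)).1 - (lam t).1‖ ^ 2 + ((lam (t + 1)).2 - (lam t).2) ^ 2) / (2 * α)
      ≤ ML t ϑ γ + (‖ϑ - (lam t).1‖ ^ 2 + (γ - (lam t).2) ^ 2) / (2 * α))
    (s : ℕ → ℝ) (hs : ∀ t ∈ Finset.Icc 1 T, s t ≤ ML t (lam t).1 (lam t).2) :
    ∀ θ : ℕ → EuclideanSpace ℝ (Fin d), (∀ t ∈ Finset.Icc 1 T, ‖θ t‖ ≤ C) →
      ∀ γ ∈ Set.Icc γlo γhi,
      ∑ t ∈ Finset.Icc 1 T, s t ≤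
        ∑ t ∈ Finset.Icc 1 T, ∑ i ∈ Finset.Icc 1 n, ℓ t i (θ t)
        + γ * Γ ^ 2 * n * T / 2
        + T * ((1 / (T : ℝ)) * ∑ t ∈ Finset.Icc 1 T,
            ‖θ t - (1 / (T : ℝ)) • ∑ u ∈ Finset.Icc 1 T, θ u‖ ^ 2) / (2 * γ)
        + C * L * Real.sqrt ((4 + C ^ 2) * T) := by
  intro θ hθ γ hγ
  set g : ℕ → EuclideanSpace ℝ (Fin d) → ℝ := fun t x => ∑ i ∈ Icc 1 n, ℓ t i x
  have hg : ∀ t ∈ Icc 1 T, ConvexOn ℝ Set.univ (g t) := fun t ht =>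
    convexOn_sum convex_univ fun i hi => convexOn_univ_of_convexComb_le (hconv t ht i hi)
  have hML_eq : ∀ t ∈ Icc 1 T, ∀ p,
      ML t p.fst p.snd = metaLoss (g t) (Γ ^ 2 * n / 2) C p :=
    fun t ht p => by rw [hML t ht, metaLoss_eq_sInf]
  have hγlo₀ : 0 < γlo := hγlo ▸ Real.rpow_pos_of_pos (Nat.cast_pos.2 hn) _
  have hT₀ : (0 : ℝ) < T := by exact_mod_cast hT
  have hL : L = metaLipschitzConst (Γ ^ 2 * n / 2) C γlo := by
    rw [hLdef, metaLipschitzConst]; ring_nf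
  have hL₀ : 0 < L := by rw [hLdef]; positivity
  have hα : 0 < α := by rw [hαdef]; positivity
  set θbar := (1 / (T : ℝ)) • ∑ u ∈ Icc 1 T, θ u
  have hθbar : ‖θbar‖ ≤ C := by
    simpa [θbar] using norm_average_le (s := Icc 1 T) ⟨1, by simp [hT]⟩ hθ
  have hregret := sum_metaLoss_le_sum_ogdBound (a := Γ ^ 2 * n / 2) hg (by positivity) hγlo₀ hα
    (x := fun t => WithLp.toLp 2 (lam t)) hlam1 hmem (fun t ht z hz => by
      rw [← hML_eq t ht, ← hML_eq t ht, WithLp.prod_norm_sub_sq, WithLp.prod_norm_sub_sq]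
      exact hmin t ht z.fst hz.1 z.snd hz.2) hθ (y := WithLp.toLp 2 (θbar, γ)) ⟨hθbar, hγ⟩
  have hbalance := tuned_step_size_bound hC (by positivity : (0 : ℝ) < 4 + C ^ 2) hL₀ hT₀
  rw [← hL, hγhi] at hregret
  rw [← hαdef] at hbalance
  have hsum : ∑ t ∈ Icc 1 T, ogdBound (g t) (Γ ^ 2 * n / 2) (θ t) (WithLp.toLp 2 (θbar, γ)) =
      ∑ t ∈ Icc 1 T, ∑ i ∈ Icc 1 n, ℓ t i (θ t) + γ * Γ ^ 2 * n * T / 2 +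
        T * ((1 / (T : ℝ)) * ∑ t ∈ Icc 1 T, ‖θ t - θbar‖ ^ 2) / (2 * γ) := by
    simp only [ogdBound, g, WithLp.toLp_fst, WithLp.toLp_snd, sum_add_distrib,
      sum_const, Nat.card_Icc, nsmul_eq_mul, ← sum_div]
    field_simp
    push_cast
    ring
  calc ∑ t ∈ Icc 1 T, s t
      ≤ ∑ t ∈ Icc 1 T, metaLoss (g t) (Γ ^ 2 * n / 2) C (WithLp.toLp 2 (lam t)) :=
        sum_le_sum fun t ht => (hs t ht).trans_eq (hML_eq t ht _)
    _ ≤ _ := hregret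
    _ = _ := by rw [hsum, add_assoc _ ((4 * C ^ 2 + (C ^ 2) ^ 2) / (2 * α)),
      show 4 * C ^ 2 + (C ^ 2) ^ 2 = C ^ 2 * (4 + C ^ 2) by ring, hbalance]

/-- Intermediate bound in the proof of Theorem 1 of the paper (before optimizing
    over the within-task step size γ). Here σ² = (1/T)Σ_t ‖θ_t - θ̄‖². -/
theorem oga_meta_learning_regret_intermediate
    (d n T : ℕ) (hd : 1 ≤ d) (hn : 1 ≤ n) (hT : 1 ≤ T)
    (Γ C β : ℝ) (hΓ : 0 < Γ) (hC : 0 < C) (hβ : 0 < β)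
    (hβC : (n : ℝ) ^ (-β) ≤ C ^ 2)
    (ℓ : ℕ → ℕ → EuclideanSpace ℝ (Fin d) → ℝ)
    (hconv : ∀ t ∈ Finset.Icc 1 T, ∀ i ∈ Finset.Icc 1 n,
      ∀ x y : EuclideanSpace ℝ (Fin d), ∀ c : ℝ, 0 ≤ c → c ≤ 1 →
        ℓ t i (c • x + (1 - c) • y) ≤ c * ℓ t i x + (1 - c) * ℓ t i y)
    (hlip : ∀ t ∈ Finset.Icc 1 T, ∀ i ∈ Finset.Icc 1 n,
      ∀ x y : EuclideanSpace ℝ (Fin d), |ℓ t i x - ℓ t i y| ≤ Γ * ‖x - y‖)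
    (γlo γhi L α : ℝ)
    (hγlo : γlo = (n : ℝ) ^ (-β)) (hγhi : γhi = C ^ 2)
    (hLdef : L = Real.sqrt ((n : ℝ) ^ 2 * Γ ^ 4 / 4 + 4 * C ^ 2 / γlo ^ 2 +
      4 * C ^ 4 / γlo ^ 4))
    (hαdef : α = (C / L) * Real.sqrt ((4 + C ^ 2) / T))
    (ML : ℕ → EuclideanSpace ℝ (Fin d) → ℝ → ℝ)
    (hML : ∀ t ∈ Finset.Icc 1 T, ∀ ϑ : EuclideanSpace ℝ (Fin d), ∀ γ : ℝ,
      ML t ϑ γ = sInf {r : ℝ | ∃ θ : EuclideanSpace ℝ (Fin d), ‖θ‖ ≤ C ∧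
        r = ∑ i ∈ Finset.Icc 1 n, ℓ t i θ + γ * Γ ^ 2 * n / 2 + ‖θ - ϑ‖ ^ 2 / (2 * γ)})
    (lam : ℕ → EuclideanSpace ℝ (Fin d) × ℝ)
    (hlam1 : ‖(lam 1).1‖ ≤ C ∧ (lam 1).2 ∈ Set.Icc γlo γhi)
    (hmem : ∀ t ∈ Finset.Icc 1 T,
      ‖(lam (t + 1)).1‖ ≤ C ∧ (lam (t + 1)).2 ∈ Set.Icc γlo γhi)
    (hmin : ∀ t ∈ Finset.Icc 1 T, ∀ ϑ : EuclideanSpace ℝ (Fin d), ‖ϑ‖ ≤ C →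
      ∀ γ ∈ Set.Icc γlo γhi,
      ML t (lam (t + 1)).1 (lam (t + 1)).2 +
        (‖(lam (t + 1)).1 - (lam t).1‖ ^ 2 + ((lam (t + 1)).2 - (lam t).2) ^ 2) / (2 * α)
      ≤ ML t ϑ γ + (‖ϑ - (lam t).1‖ ^ 2 + (γ - (lam t).2) ^ 2) / (2 * α))
    (s : ℕ → ℝ) (hs : ∀ t ∈ Finset.Icc 1 T, s t ≤ ML t (lam t).1 (lam t).2) :
    ∀ θ : ℕ → EuclideanSpace ℝ (Fin d), (∀ t ∈ Finset.Icc 1 T, ‖θ t‖ ≤ C) →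
      ∀ γ ∈ Set.Icc γlo γhi,
      ∑ t ∈ Finset.Icc 1 T, s t ≤
        ∑ t ∈ Finset.Icc 1 T, ∑ i ∈ Finset.Icc 1 n, ℓ t i (θ t)
        + γ * Γ ^ 2 * n * T / 2
        + T * ((1 / (T : ℝ)) * ∑ t ∈ Finset.Icc 1 T,
            ‖θ t - (1 / (T : ℝ)) • ∑ u ∈ Finset.Icc 1 T, θ u‖ ^ 2) / (2 * γ)
        + C * L * Real.sqrt ((4 + C ^ 2) * T) :=
  oga_meta_learning_regret_intermediate_general d n T hn hT Γ C β hC ℓ hconv γlo γhi L α hγlo hγhi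
    hLdef hαdef ML hML lam hlam1 hmem hmin s hs
end

section
/- Let n ≥ 1, T > 0, β > 0, Γ > 0, C > 0 be real numbers with n^{-β} ≤ C², and let σ be a real number with 0 ≤ σ ≤ 2C. Define γ* = min( C², max( n^{-β}, σ/(Γ√n) ) ). Then γ* Γ² n T / 2 + T σ² / (2 γ*) ≤ Γ² T n^{1-β} / 2 + σ Γ T √n + T σ / C. -/
/-! With `A = Γ²nT/2` and `m = σ/(Γ√n)` the objective is `γ ↦ γA + m²A/γ`, minimized at `γ = m`.
For the clipped step `γ = min hi (max lo m)`: `γ ≤ lo + m` bounds the first term by `lo·A + m·A`,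
and either `γ = hi` or `γ ≥ m`, so the second term is at most `m²A/hi + m·A`.
Finally `m²A/C² = Tσ²/(2C²) ≤ Tσ/C` because `σ ≤ 2C`. -/

section ClippedStep

variable {lo hi m A : ℝ}

theorem min_max_mul_le (hlo : 0 ≤ lo) (hm : 0 ≤ m) (hA : 0 ≤ A) :
    min hi (max lo m) * A ≤ lo * A + m * A := by
  rw [← add_mul]
  exact mul_le_mul_of_nonneg_right ((min_le_right _ _).trans (max_le_add_of_nonneg hlo hm)) hA

theorem sq_mul_div_min_max_le (hhi : 0 ≤ hi) (hm : 0 ≤ m) (hA : 0 ≤ A) :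
    m ^ 2 * A / min hi (max lo m) ≤ m ^ 2 * A / hi + m * A := by
  rcases le_total hi (max lo m) with h | h
  · rw [min_eq_left h]
    linarith [mul_nonneg hm hA]
  · rw [min_eq_right h]
    rcases hm.eq_or_lt with rfl | hm
    · simp
    calc m ^ 2 * A / max lo m ≤ m ^ 2 * A / m :=
          div_le_div_of_nonneg_left (by positivity) hm (le_max_right _ _)
      _ = m * A := by field_simp
      _ ≤ m ^ 2 * A / hi + m * A := le_add_of_nonneg_left (by positivity)

theorem clipped_mul_add_div_le (hlo : 0 ≤ lo) (hhi : 0 ≤ hi) (hm : 0 ≤ m) (hA : 0 ≤ A) :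
    min hi (max lo m) * A + m ^ 2 * A / min hi (max lo m) ≤
      lo * A + 2 * m * A + m ^ 2 * A / hi := by
  linarith [min_max_mul_le (hi := hi) hlo hm hA, sq_mul_div_min_max_le (lo := lo) hhi hm hA]

end ClippedStep

theorem clipped_step_size_bound_general
    (n T β Γ C σ : ℝ) (hn : 1 ≤ n) (hT : 0 < T)
    (hΓ : 0 < Γ) (hC : 0 < C)
    (hσ0 : 0 ≤ σ) (hσ : σ ≤ 2 * C) :
    min (C ^ 2) (max (n ^ (-β)) (σ / (Γ * Real.sqrt n))) * Γ ^ 2 * n * T / 2 +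
      T * σ ^ 2 / (2 * min (C ^ 2) (max (n ^ (-β)) (σ / (Γ * Real.sqrt n)))) ≤
        Γ ^ 2 * T * n ^ (1 - β) / 2 + σ * Γ * T * Real.sqrt n + T * σ / C := by
  have hn0 : 0 < n := by linarith
  have hsqrt : 0 < Real.sqrt n := Real.sqrt_pos.2 hn0
  set A := Γ ^ 2 * n * T / 2
  set m := σ / (Γ * Real.sqrt n)
  have hsq : m ^ 2 * A = T * σ ^ 2 / 2 := by
    simp only [m, A]
    field_simp
    rw [Real.sq_sqrt hn0.le]
  have hlin : 2 * m * A = σ * Γ * T * Real.sqrt n := by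
    simp only [m, A]
    field_simp
    rw [Real.sq_sqrt hn0.le]
  have hpow : n ^ (-β) * A = Γ ^ 2 * T * n ^ (1 - β) / 2 := by
    rw [sub_eq_neg_add, Real.rpow_add hn0, Real.rpow_one]
    ring
  have hC2 : T * σ ^ 2 / 2 / C ^ 2 ≤ T * σ / C := by
    rw [div_le_div_iff₀ (by positivity) hC]
    nlinarith [mul_nonneg (mul_nonneg (mul_nonneg (sub_nonneg.2 hσ) hT.le) hσ0) hC.le]
  have key := clipped_mul_add_div_le (Real.rpow_nonneg hn0.le (-β)) (sq_nonneg C)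
    (by positivity : 0 ≤ m) (by positivity : 0 ≤ A)
  rw [hsq, hlin, hpow] at key
  calc _ = _ + T * σ ^ 2 / 2 / min (C ^ 2) (max (n ^ (-β)) m) := by ring
    _ ≤ _ := key.trans (by linarith)

/-- Scalar inequality combining the bounds (proof:thm:4) and (proof:thm:5) in the
    proof of Theorem 1: the clipped minimizer γ* = (n^{-β} ∨ σ/(Γ√n)) ∧ C² of
    γ ↦ γΓ²nT/2 + Tσ²/(2γ) achieves the stated explicit bound. -/
theorem clipped_step_size_bound
    (n T β Γ C σ : ℝ) (hn : 1 ≤ n) (hT : 0 < T) (hβ : 0 < β)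
    (hΓ : 0 < Γ) (hC : 0 < C) (hβC : n ^ (-β) ≤ C ^ 2)
    (hσ0 : 0 ≤ σ) (hσ : σ ≤ 2 * C) :
    min (C ^ 2) (max (n ^ (-β)) (σ / (Γ * Real.sqrt n))) * Γ ^ 2 * n * T / 2 +
      T * σ ^ 2 / (2 * min (C ^ 2) (max (n ^ (-β)) (σ / (Γ * Real.sqrt n)))) ≤
        Γ ^ 2 * T * n ^ (1 - β) / 2 + σ * Γ * T * Real.sqrt n + T * σ / C :=
  clipped_step_size_bound_general n T β Γ C σ hn hT hΓ hC hσ0 hσ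
end

section
/- Let n ≥ 1 and M ≥ 1 be natural numbers and b > 0 a real number. Define η̂ = min( 1, max( 1/n, (2/b)√(2 log M / n) ) ). Then η̂ · n b² / 8 + (log M)/η̂ ≤ b²/8 + b √( n log M / 2 ) + log M. -/
/-!
Writing `log M = A s²` with `A = n b² / 8` and `s = (2/b) √(2 log M / n)`, the regret term is
`η A + A s² / η`, which equals `2 A s = b √(n log M / 2)` at its minimiser `η = s`. Clipping `s`
to `[lo, hi]` costs at most `lo A` in the first term (since `η ≤ max lo s`) and at most `A s² / hi`
in the second (since `η ≥ min hi s`).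
-/

namespace ClippedRate

variable {η lo hi A s : ℝ}

theorem mul_le_of_le_max (hA : 0 ≤ A) (hlo : 0 ≤ lo) (hs : 0 ≤ s) (h : η ≤ max lo s) :
    η * A ≤ lo * A + A * s := by
  have : η ≤ lo + s := h.trans (max_le_add_of_nonneg hlo hs)
  nlinarith

theorem sq_div_le_of_min_le (hA : 0 ≤ A) (hs : 0 ≤ s) (hhi : 0 < hi) (hη : 0 < η)
    (h : min hi s ≤ η) : A * s ^ 2 / η ≤ A * s ^ 2 / hi + A * s := by
  have hAs : 0 ≤ A * s := mul_nonneg hA hs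
  rcases min_le_iff.mp h with h | h
  · have := div_le_div_of_nonneg_left (by positivity : 0 ≤ A * s ^ 2) hhi h
    linarith
  · have : A * s ^ 2 / η ≤ A * s := by
      rw [div_le_iff₀ hη]
      nlinarith
    have : 0 ≤ A * s ^ 2 / hi := by positivity
    linarith

theorem clamp_mul_add_div_le {L : ℝ} (hlo : 0 < lo) (hhi : 0 < hi) (hA : 0 ≤ A) (hs : 0 ≤ s)
    (hL : L = A * s ^ 2) :
    min hi (max lo s) * A + L / min hi (max lo s) ≤ lo * A + 2 * (A * s) + L / hi := by
  have hη : 0 < min hi (max lo s) := lt_min hhi (lt_max_of_lt_left hlo)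
  have h₁ := mul_le_of_le_max hA hlo.le hs (min_le_right hi (max lo s))
  have h₂ := sq_div_le_of_min_le hA hs hhi hη (min_le_min_left hi (le_max_right lo s))
  rw [hL]
  linarith

end ClippedRate

open ClippedRate in
/-- Key scalar computation in the proof of Theorem 2: plugging the clipped rate
    η̂ = 1 ∧ (1/n ∨ (2/b)√(2 log M / n)) into the EWA regret term. -/
theorem clipped_rate_bound
    (n M : ℕ) (hn : 1 ≤ n) (hM : 1 ≤ M) (b : ℝ) (hb : 0 < b) :
    min 1 (max (1 / (n : ℝ)) ((2 / b) * Real.sqrt (2 * Real.log M / n))) * n * b ^ 2 / 8 +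
      Real.log M /
        min 1 (max (1 / (n : ℝ)) ((2 / b) * Real.sqrt (2 * Real.log M / n))) ≤
      b ^ 2 / 8 + b * Real.sqrt (n * Real.log M / 2) + Real.log M := by
  have hn0 : (0 : ℝ) < n := by exact_mod_cast hn
  have hL : 0 ≤ Real.log M := Real.log_nonneg (by exact_mod_cast hM)
  set r := Real.sqrt (2 * Real.log M / n) with hr
  have hr2 : r ^ 2 = 2 * Real.log M / n := Real.sq_sqrt (by positivity)
  have hroot : Real.sqrt (n * Real.log M / 2) = n / 2 * r := by
    rw [hr, ← Real.sqrt_sq (by positivity : (0 : ℝ) ≤ n / 2), ← Real.sqrt_mul (by positivity)]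
    congr 1
    field_simp
  have key := clamp_mul_add_div_le (lo := 1 / (n : ℝ)) (hi := 1) (A := n * b ^ 2 / 8)
    (s := 2 / b * r) (L := Real.log M) (by positivity) one_pos (by positivity) (by positivity)
    (by rw [mul_pow, hr2]; field_simp; ring)
  rw [hroot]
  calc _ = _ := by ring
    _ ≤ _ := key
    _ = _ := by field_simp; ring
end

section
/- Let n, T ≥ 1 and M ≥ 1 be natural numbers, C > 0, and let Θ₀ = {θ^{(1)},…,θ^{(M)}} be a finite set of cardinality M. For t = 1,…,T and i = 1,…,n let ℓ_{t,i} : Θ₀ → ℝ, and let θ_t* ∈ Θ₀ minimize θ ↦ Σ_{i=1}^n ℓ_{t,i}(θ) over Θ₀. Let m* be the cardinality of the set {θ_1*, …, θ_T*}. Define Λ = { π ∈ ℝ^M : Σ_j π_j = 1 and π_j ≥ 1/(2M) for all j }, and for π ∈ Λ define L_t(π) = Σ_{i=1}^n ℓ_{t,i}(θ_t*) + C log(1/π(θ_t*)), where π(θ^{(j)}) = π_j. Set α = 1/(2CM√T). Let π_1 = (1/M,…,1/M) and, for t = 1,…,T, let π_{t+1} ∈ Λ minimize π ↦ L_t(π)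 + ‖π - π_t‖²/(2α) over Λ (Euclidean norm on ℝ^M). Suppose s_1,…,s_T ∈ ℝ satisfy s_t ≤ L_t(π_t) for each t. Then: Σ_{t=1}^T s_t ≤ Σ_{t=1}^T Σ_{i=1}^n ℓ_{t,i}(θ_t*) + C T log(2 m*) + 2CM√T. -/
/-!
OPMS is a proximal method on the convex losses `L_t(π) = const + C log (1 / π(θ_t*))` over `Λ`.
Comparing a proximal step `x ↦ p` with the points of the segment towards any `u ∈ Λ` gives the
three-point inequality `L_t(p) + (‖u - p‖² + ‖p - x‖²) / (2α) ≤ L_t(u) + ‖u - x‖² / (2α)`.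
Every coordinate of a point of `Λ` is at least `1 / (2M)`, so `L_t` is `2CM`-Lipschitz on `Λ`,
and `2CM ‖p - x‖ - ‖p - x‖² / (2α) ≤ α (2CM)² / 2`; summing, the distances telescope. The
comparator `u` with mass `1 / (2M)` on every predictor and `1 / (2m*)` more on each `θ_t*` has
`L_t(u) ≤ Σ ℓ + C log (2m*)` and `‖u - π_1‖² ≤ 1`, and `α` balances the two remaining terms at
`CM√T` each.
-/

open Finset Filter Topology

theorem le_of_forall_mem_Ioc_le_add_mul {a b c : ℝ} (h : ∀ l ∈ Set.Ioc (0 : ℝ) 1, a ≤ b + l * c) :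
    a ≤ b := by
  have hlim : Tendsto (fun l : ℝ => b + l * c) (𝓝[>] 0) (𝓝 b) := by
    have : Continuous fun l : ℝ => b + l * c := by fun_prop
    simpa using (this.tendsto 0).mono_left nhdsWithin_le_nhds
  exact ge_of_tendsto hlim (eventually_of_mem (Ioc_mem_nhdsGT one_pos) h)

theorem sum_Icc_one_sub_succ {G : Type*} [AddCommGroup G] (g : ℕ → G) (T : ℕ) :
    ∑ t ∈ Icc 1 T, (g t - g (t + 1)) = g 1 - g (T + 1) := by
  rw [← Ico_add_one_right_eq_Icc, ← neg_sub, ← sum_Ico_sub g (by omega : 1 ≤ T + 1),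
    ← sum_neg_distrib]
  simp only [neg_sub]

section Proximal

variable {E : Type*} [NormedAddCommGroup E] [InnerProductSpace ℝ E]
  {S : Set E} {f : E → ℝ} {x p q u : E} {α G : ℝ}

-- Compare `p` with `p + l • (q - p) ∈ S` and let `l → 0⁺`: no differentiability is needed.
theorem ConvexOn.le_add_inner_of_isMinOn_prox (hf : ConvexOn ℝ S f) (hα : 0 < α)
    (hp : p ∈ S) (hq : q ∈ S)
    (hmin : IsMinOn (fun r => f r + ‖r - x‖ ^ 2 / (2 * α)) S p) :
    f p ≤ f q + inner ℝ (p - x) (q - p) / α := by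
  refine le_of_forall_mem_Ioc_le_add_mul (c := ‖q - p‖ ^ 2 / (2 * α)) fun l ⟨hl0, hl1⟩ => ?_
  have hseg : p + l • (q - p) = (1 - l) • p + l • q := by
    rw [smul_sub, sub_smul, one_smul]; abel
  have hmem : p + l • (q - p) ∈ S :=
    hseg ▸ hf.1 hp hq (sub_nonneg.2 hl1) hl0.le (by ring)
  have hconv : f (p + l • (q - p)) ≤ (1 - l) * f p + l * f q :=
    hseg ▸ hf.2 hp hq (sub_nonneg.2 hl1) hl0.le (by ring)
  have hnorm : ‖p + l • (q - p) - x‖ ^ 2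
      = ‖p - x‖ ^ 2 + 2 * (l * inner ℝ (p - x) (q - p)) + l ^ 2 * ‖q - p‖ ^ 2 := by
    rw [show p + l • (q - p) - x = (p - x) + l • (q - p) by abel, norm_add_sq_real,
      real_inner_smul_right, norm_smul, Real.norm_eq_abs, mul_pow, sq_abs]
  have := isMinOn_iff.1 hmin _ hmem
  simp only [hnorm] at this
  have hsplit : (‖p - x‖ ^ 2 + 2 * (l * inner ℝ (p - x) (q - p)) + l ^ 2 * ‖q - p‖ ^ 2) / (2 * α)
      = ‖p - x‖ ^ 2 / (2 * α) + l * (inner ℝ (p - x) (q - p) / α)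
        + l * (l * (‖q - p‖ ^ 2 / (2 * α))) := by
    field_simp
  have key : l * f p ≤ l * (f q + inner ℝ (p - x) (q - p) / α + l * (‖q - p‖ ^ 2 / (2 * α))) := by
    linarith
  exact le_of_mul_le_mul_left key hl0

theorem ConvexOn.three_point_of_isMinOn_prox (hf : ConvexOn ℝ S f) (hα : 0 < α)
    (hp : p ∈ S) (hq : q ∈ S)
    (hmin : IsMinOn (fun r => f r + ‖r - x‖ ^ 2 / (2 * α)) S p) :
    f p + (‖q - p‖ ^ 2 + ‖p - x‖ ^ 2) / (2 * α) ≤ f q + ‖q - x‖ ^ 2 / (2 * α) := by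
  have hvar := hf.le_add_inner_of_isMinOn_prox hα hp hq hmin
  have hnorm : ‖q - x‖ ^ 2 = ‖p - x‖ ^ 2 + 2 * inner ℝ (p - x) (q - p) + ‖q - p‖ ^ 2 := by
    rw [← norm_add_sq_real, sub_add_sub_cancel']
  rw [hnorm]
  field_simp
  field_simp at hvar
  linarith

theorem ConvexOn.prox_step_le (hf : ConvexOn ℝ S f) (hα : 0 < α) (hp : p ∈ S) (hu : u ∈ S)
    (hmin : IsMinOn (fun r => f r + ‖r - x‖ ^ 2 / (2 * α)) S p)
    (hlip : f x ≤ f p + G * ‖p - x‖) :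
    f x ≤ f u + (‖u - x‖ ^ 2 - ‖u - p‖ ^ 2) / (2 * α) + α * G ^ 2 / 2 := by
  have h3 := hf.three_point_of_isMinOn_prox hα hp hu hmin
  -- AM-GM: the linear loss G‖p - x‖ is absorbed by the quadratic proximal term.
  have hamgm : G * ‖p - x‖ ≤ ‖p - x‖ ^ 2 / (2 * α) + α * G ^ 2 / 2 := by
    have : 0 ≤ (‖p - x‖ - α * G) ^ 2 / (2 * α) := by positivity
    field_simp at this ⊢
    nlinarith
  have : (‖u - x‖ ^ 2 - ‖u - p‖ ^ 2) / (2 * α)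
      = ‖u - x‖ ^ 2 / (2 * α) - (‖u - p‖ ^ 2 + ‖p - x‖ ^ 2) / (2 * α) + ‖p - x‖ ^ 2 / (2 * α) := by
    ring
  linarith

theorem online_prox_regret_le {f : ℕ → E → ℝ} {x : ℕ → E} {T : ℕ} (hα : 0 < α) (hu : u ∈ S)
    (hf : ∀ t ∈ Icc 1 T, ConvexOn ℝ S (f t))
    (hlip : ∀ t ∈ Icc 1 T, ∀ v ∈ S, ∀ w ∈ S, f t v ≤ f t w + G * ‖w - v‖)
    (hx₁ : x 1 ∈ S) (hx : ∀ t ∈ Icc 1 T, x (t + 1) ∈ S)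
    (hmin : ∀ t ∈ Icc 1 T, IsMinOn (fun r => f t r + ‖r - x t‖ ^ 2 / (2 * α)) S (x (t + 1))) :
    ∑ t ∈ Icc 1 T, f t (x t)
      ≤ ∑ t ∈ Icc 1 T, f t u + ‖u - x 1‖ ^ 2 / (2 * α) + T * (α * G ^ 2 / 2) := by
  have hxS : ∀ t ∈ Icc 1 T, x t ∈ S := by
    intro t ht
    obtain rfl | h := (mem_Icc.1 ht).1.eq_or_lt
    · exact hx₁
    · simpa [Nat.sub_add_cancel h.le] using hx (t - 1) (by grind)
  have hstep := sum_le_sum fun t ht => (hf t ht).prox_step_le hα (hx t ht) hu (hmin t ht)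
    (hlip t ht _ (hxS t ht) _ (hx t ht))
  rw [sum_add_distrib, sum_add_distrib, ← sum_div, sum_Icc_one_sub_succ (fun t => ‖u - x t‖ ^ 2),
    sum_const, Nat.card_Icc, nsmul_eq_mul, Nat.add_sub_cancel, sub_div] at hstep
  have : 0 ≤ ‖u - x (T + 1)‖ ^ 2 / (2 * α) := by positivity
  linarith

end Proximal

section PriorLogLoss

variable {ι : Type*} {a C : ℝ} {j : ι}

noncomputable def priorLogLoss (a C : ℝ) (j : ι) (v : EuclideanSpace ℝ ι) : ℝ :=
  a + C * Real.log (1 / v j)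

theorem priorLogLoss_le_of_le {b : ℝ} (hC : 0 ≤ C) (hb : 0 < b) {v : EuclideanSpace ℝ ι}
    (hv : b ≤ v j) : priorLogLoss a C j v ≤ a + C * Real.log (1 / b) := by
  have : Real.log (1 / v j) ≤ Real.log (1 / b) :=
    Real.log_le_log (one_div_pos.2 (hb.trans_le hv)) (one_div_le_one_div_of_le hb hv)
  unfold priorLogLoss
  gcongr

end PriorLogLoss

section Simplex

variable {ι : Type*} [Fintype ι]

def restrictedSimplex (ι : Type*) [Fintype ι] (c : ℝ) : Set (EuclideanSpace ℝ ι) :=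
  {π | ∑ j, π j = 1 ∧ ∀ j, c ≤ π j}

theorem convex_restrictedSimplex (c : ℝ) : Convex ℝ (restrictedSimplex ι c) := by
  intro v ⟨hv1, hvc⟩ w ⟨hw1, hwc⟩ a b ha hb hab
  simp only [restrictedSimplex, Set.mem_ofPred_eq, PiLp.add_apply, PiLp.smul_apply, smul_eq_mul,
    sum_add_distrib, ← mul_sum, hv1, hw1]
  refine ⟨by simpa using hab, fun j => ?_⟩
  have hc : c = a * c + b * c := by rw [← add_mul, hab, one_mul]
  nlinarith [mul_le_mul_of_nonneg_left (hvc j) ha, mul_le_mul_of_nonneg_left (hwc j) hb]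

variable {a C c : ℝ} {j : ι}

theorem pos_of_mem_restrictedSimplex (hc : 0 < c) {v : EuclideanSpace ℝ ι}
    (hv : v ∈ restrictedSimplex ι c) (j : ι) : 0 < v j :=
  hc.trans_le (hv.2 j)

theorem convexOn_priorLogLoss (hC : 0 ≤ C) (hc : 0 < c) :
    ConvexOn ℝ (restrictedSimplex ι c) (priorLogLoss a C j) := by
  have hneglog : ConvexOn ℝ (Set.Ioi 0) fun x : ℝ => -Real.log x :=
    strictConcaveOn_log_Ioi.concaveOn.neg
  have hlog : ConvexOn ℝ (restrictedSimplex ι c) fun v => Real.log (1 / v j) :=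
    ((hneglog.comp_linearMap (EuclideanSpace.projₗ j)).subset
      (fun v hv => pos_of_mem_restrictedSimplex hc hv j) (convex_restrictedSimplex c)).congr
      fun v _ => by simp [Real.log_inv]
  exact (convexOn_const a (convex_restrictedSimplex c)).add (hlog.smul hC)

theorem priorLogLoss_le_add_norm (hC : 0 ≤ C) (hc : 0 < c) {v w : EuclideanSpace ℝ ι}
    (hv : c ≤ v j) (hw : 0 < w j) :
    priorLogLoss a C j v ≤ priorLogLoss a C j w + C / c * ‖w - v‖ := by
  have hv0 : 0 < v j := hc.trans_le hv
  have hcoord : |w j - v j| ≤ ‖w - v‖ := by simpa using PiLp.norm_apply_le (w - v) j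
  have hratio : Real.log (w j / v j) ≤ ‖w - v‖ / c := calc
    Real.log (w j / v j) ≤ w j / v j - 1 := Real.log_le_sub_one_of_pos (div_pos hw hv0)
    _ = (w j - v j) / v j := by field_simp
    _ ≤ |w j - v j| / v j := by gcongr; exact le_abs_self _
    _ ≤ ‖w - v‖ / c := by gcongr
  rw [Real.log_div hw.ne' hv0.ne'] at hratio
  simp only [priorLogLoss, one_div, Real.log_inv, div_mul_eq_mul_div, mul_div_assoc]
  linarith [mul_le_mul_of_nonneg_left hratio hC]

theorem norm_sub_uniform_sq_le_one {u v : EuclideanSpace ℝ ι} (hu0 : ∀ j, 0 ≤ u j)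
    (hu1 : ∑ j, u j = 1) (hv : ∀ j, v j = 1 / Fintype.card ι) : ‖u - v‖ ^ 2 ≤ 1 := by
  have hι : Nonempty ι := by
    by_contra h
    simp [not_nonempty_iff.1 h] at hu1
  have hN : (0 : ℝ) < Fintype.card ι := by exact_mod_cast Fintype.card_pos
  -- `u j ^ 2 ≤ u j` is the only estimate needed; the cross terms are exact.
  have hcoord : ∀ j, (u j - v j) ^ 2
      ≤ u j - 2 / Fintype.card ι * u j + 1 / (Fintype.card ι : ℝ) ^ 2 := by
    intro j
    have hu_le : u j ≤ 1 := hu1 ▸ single_le_sum (fun k _ => hu0 k) (mem_univ j)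
    have : (u j - v j) ^ 2 = u j ^ 2 - 2 / Fintype.card ι * u j + 1 / (Fintype.card ι : ℝ) ^ 2 := by
      rw [hv]; ring
    nlinarith [hu0 j]
  calc ‖u - v‖ ^ 2 = ∑ j, (u j - v j) ^ 2 := by simp [EuclideanSpace.real_norm_sq_eq]
    _ ≤ ∑ j, (u j - 2 / Fintype.card ι * u j + 1 / (Fintype.card ι : ℝ) ^ 2) :=
      sum_le_sum fun j _ => hcoord j
    _ = 1 - 1 / Fintype.card ι := by
      simp only [sum_add_distrib, sum_sub_distrib, ← mul_sum, hu1, sum_const, card_univ,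
        nsmul_eq_mul]
      field_simp; ring
    _ ≤ 1 := by linarith [one_div_pos.2 hN]

theorem uniform_mem_restrictedSimplex [Nonempty ι] {v : EuclideanSpace ℝ ι}
    (hv : ∀ j, v j = 1 / Fintype.card ι) :
    v ∈ restrictedSimplex ι (1 / (2 * Fintype.card ι)) := by
  have hN : (0 : ℝ) < Fintype.card ι := by exact_mod_cast Fintype.card_pos
  refine ⟨by simp [hv, hN.ne'], fun j => hv j ▸ ?_⟩
  gcongr
  linarith

variable [DecidableEq ι]

noncomputable def mixUniform (s : Finset ι) : EuclideanSpace ℝ ι :=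
  WithLp.toLp 2 fun j => 1 / (2 * Fintype.card ι) + if j ∈ s then 1 / (2 * (#s : ℝ)) else 0

theorem mixUniform_mem {s : Finset ι} (hs : s.Nonempty) :
    mixUniform s ∈ restrictedSimplex ι (1 / (2 * Fintype.card ι)) := by
  refine ⟨?_, fun j => le_add_of_nonneg_right (by positivity)⟩
  have hs0 : (#s : ℝ) ≠ 0 := by exact_mod_cast hs.card_pos.ne'
  have hι0 : (Fintype.card ι : ℝ) ≠ 0 := by exact_mod_cast (Fintype.card_pos_iff.2 ⟨hs.choose⟩).ne'
  simp only [mixUniform, sum_add_distrib, sum_ite_mem, univ_inter, sum_const, card_univ,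
    nsmul_eq_mul]
  field_simp
  ring

theorem one_div_two_card_le_mixUniform_apply {s : Finset ι} {j : ι} (hj : j ∈ s) :
    1 / (2 * (#s : ℝ)) ≤ mixUniform s j := by
  simp only [mixUniform, if_pos hj]
  exact le_add_of_nonneg_left (by positivity)

end Simplex

theorem ewa_prior_meta_learning_regret_general
    (n T M : ℕ) (hT : 1 ≤ T) (hM : 1 ≤ M) (C : ℝ) (hC : 0 < C)
    (ℓ : ℕ → ℕ → Fin M → ℝ)
    (θstar : ℕ → Fin M)
    (mstar : ℕ) (hmstar : mstar = ((Finset.Icc 1 T).image θstar).card)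
    (Λ : Set (EuclideanSpace ℝ (Fin M)))
    (hΛ : Λ = {π : EuclideanSpace ℝ (Fin M) |
      ∑ j, π j = 1 ∧ ∀ j, 1 / (2 * (M : ℝ)) ≤ π j})
    (ML : ℕ → EuclideanSpace ℝ (Fin M) → ℝ)
    (hML : ∀ t ∈ Finset.Icc 1 T, ∀ π : EuclideanSpace ℝ (Fin M),
      ML t π = ∑ i ∈ Finset.Icc 1 n, ℓ t i (θstar t) +
        C * Real.log (1 / π (θstar t)))
    (α : ℝ) (hα : α = 1 / (2 * C * M * Real.sqrt T))
    (π : ℕ → EuclideanSpace ℝ (Fin M))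
    (hπ1 : ∀ j : Fin M, π 1 j = 1 / (M : ℝ))
    (hπmem : ∀ t ∈ Finset.Icc 1 T, π (t + 1) ∈ Λ)
    (hmin : ∀ t ∈ Finset.Icc 1 T, ∀ q ∈ Λ,
      ML t (π (t + 1)) + ‖π (t + 1) - π t‖ ^ 2 / (2 * α) ≤
        ML t q + ‖q - π t‖ ^ 2 / (2 * α))
    (s : ℕ → ℝ) (hs : ∀ t ∈ Finset.Icc 1 T, s t ≤ ML t (π t)) :
    ∑ t ∈ Finset.Icc 1 T, s t ≤
      ∑ t ∈ Finset.Icc 1 T, ∑ i ∈ Finset.Icc 1 n, ℓ t i (θstar t)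
      + C * T * Real.log (2 * mstar)
      + 2 * C * M * Real.sqrt T := by
  have hM0 : (0 : ℝ) < M := by exact_mod_cast hM
  have hsqrtT : 0 < Real.sqrt T := Real.sqrt_pos.2 (by exact_mod_cast hT)
  have hα0 : 0 < α := hα ▸ by positivity
  have : Nonempty (Fin M) := ⟨⟨0, hM⟩⟩
  replace hΛ : Λ = restrictedSimplex (Fin M) (1 / (2 * M)) := hΛ
  replace hML : ∀ t ∈ Icc 1 T, ML t = priorLogLoss (∑ i ∈ Icc 1 n, ℓ t i (θstar t)) C (θstar t) :=
    fun t ht => funext (hML t ht)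
  have hπ₁ : π 1 ∈ Λ := by
    simpa [hΛ] using uniform_mem_restrictedSimplex (v := π 1) (by simpa using hπ1)
  set u := mixUniform ((Icc 1 T).image θstar)
  have hu : u ∈ Λ := by simpa [hΛ] using mixUniform_mem ((nonempty_Icc.2 hT).image θstar)
  have hreg := online_prox_regret_le (G := C / (1 / (2 * M))) hα0 hu
    (fun t ht => hML t ht ▸ hΛ ▸ convexOn_priorLogLoss hC.le (by positivity))
    (fun t ht v hv w hw => hML t ht ▸ priorLogLoss_le_add_norm hC.le (by positivity)
      ((hΛ ▸ hv).2 _) (pos_of_mem_restrictedSimplex (by positivity) (hΛ ▸ hw) _))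
    hπ₁ hπmem fun t ht => isMinOn_iff.2 (hmin t ht)
  have hcomp : ∀ t ∈ Icc 1 T, ML t u ≤ ∑ i ∈ Icc 1 n, ℓ t i (θstar t) + C * Real.log (2 * mstar) :=
    fun t ht => by
      simpa [hML t ht, hmstar] using priorLogLoss_le_of_le hC.le (by positivity)
        (one_div_two_card_le_mixUniform_apply (mem_image_of_mem θstar ht))
  have hinit : ‖u - π 1‖ ^ 2 ≤ 1 := norm_sub_uniform_sq_le_one
    (fun j => (pos_of_mem_restrictedSimplex (by positivity) (hΛ ▸ hu) j).le) (hΛ ▸ hu).1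
    (by simpa using hπ1)
  have hprox : ‖u - π 1‖ ^ 2 / (2 * α) ≤ C * M * Real.sqrt T := by
    rw [hα]; field_simp; nlinarith
  have hlin : T * (α * (C / (1 / (2 * M))) ^ 2 / 2) = C * M * Real.sqrt T := by
    rw [hα]; field_simp; rw [Real.sq_sqrt (by positivity)]
  calc ∑ t ∈ Icc 1 T, s t ≤ ∑ t ∈ Icc 1 T, ML t (π t) := sum_le_sum hs
    _ ≤ ∑ t ∈ Icc 1 T, (∑ i ∈ Icc 1 n, ℓ t i (θstar t) + C * Real.log (2 * mstar))
        + C * M * Real.sqrt T + C * M * Real.sqrt T := by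
      linarith [sum_le_sum hcomp]
    _ = _ := by simp only [sum_add_distrib, sum_const, Nat.card_Icc, nsmul_eq_mul]; push_cast; ring

/-- Theorem 3 of the paper: meta-learning the prior of exponentially weighted
    aggregation (EWA) over a finite set Θ₀ = {θ^{(1)},…,θ^{(M)}} (identified with
    Fin M) via OPMS on the restricted simplex. -/
theorem ewa_prior_meta_learning_regret
    (n T M : ℕ) (hn : 1 ≤ n) (hT : 1 ≤ T) (hM : 1 ≤ M) (C : ℝ) (hC : 0 < C)
    (ℓ : ℕ → ℕ → Fin M → ℝ)
    (θstar : ℕ → Fin M)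
    (hθstar : ∀ t ∈ Finset.Icc 1 T, ∀ j : Fin M,
      ∑ i ∈ Finset.Icc 1 n, ℓ t i (θstar t) ≤ ∑ i ∈ Finset.Icc 1 n, ℓ t i j)
    (mstar : ℕ) (hmstar : mstar = ((Finset.Icc 1 T).image θstar).card)
    (Λ : Set (EuclideanSpace ℝ (Fin M)))
    (hΛ : Λ = {π : EuclideanSpace ℝ (Fin M) |
      ∑ j, π j = 1 ∧ ∀ j, 1 / (2 * (M : ℝ)) ≤ π j})
    (ML : ℕ → EuclideanSpace ℝ (Fin M) → ℝ)
    (hML : ∀ t ∈ Finset.Icc 1 T, ∀ π : EuclideanSpace ℝ (Fin M),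
      ML t π = ∑ i ∈ Finset.Icc 1 n, ℓ t i (θstar t) +
        C * Real.log (1 / π (θstar t)))
    (α : ℝ) (hα : α = 1 / (2 * C * M * Real.sqrt T))
    (π : ℕ → EuclideanSpace ℝ (Fin M))
    (hπ1 : ∀ j : Fin M, π 1 j = 1 / (M : ℝ))
    (hπmem : ∀ t ∈ Finset.Icc 1 T, π (t + 1) ∈ Λ)
    (hmin : ∀ t ∈ Finset.Icc 1 T, ∀ q ∈ Λ,
      ML t (π (t + 1)) + ‖π (t + 1) - π t‖ ^ 2 / (2 * α) ≤
        ML t q + ‖q - π t‖ ^ 2 / (2 * α))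
    (s : ℕ → ℝ) (hs : ∀ t ∈ Finset.Icc 1 T, s t ≤ ML t (π t)) :
    ∑ t ∈ Finset.Icc 1 T, s t ≤
      ∑ t ∈ Finset.Icc 1 T, ∑ i ∈ Finset.Icc 1 n, ℓ t i (θstar t)
      + C * T * Real.log (2 * mstar)
      + 2 * C * M * Real.sqrt T :=
  ewa_prior_meta_learning_regret_general n T M hT hM C hC ℓ θstar mstar hmstar Λ hΛ ML hML α hα π
    hπ1 hπmem hmin s hs
end
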